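/- arXiv:1708.04634 — 7 statements merged into one kernel-verified Lean document; each statement's English description precedes it below -/
import Mathlib

section
/- If X and Y are symmetric positive semidefinite n×n real matrices with the same kernel and e^{-ε}·X ⪯ Y ⪯ e^{ε}·X, then e^{-ε}·X⁺ ⪯ Y⁺ ⪯ e^{ε}·X⁺, where X⁺ denotes the Moore–Penrose pseudoinverse. -/
/-!
If `0 ⪯ A ⪯ B` and `A⁺A = B⁺B`, then
`A⁺ - B⁺ = (B⁺ - A⁺) A (B⁺ - A⁺) + B⁺ (B - A) B⁺`,
since both `A⁺` and `B⁺` are fixed on either side by this common projection; both summands are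
positive semidefinite, so `B⁺ ⪯ A⁺`. Equal kernels give `X⁺X = Y⁺Y`, and `(cX)⁺ = c⁻¹X⁺`, so
applying this to `e^{-ε}X ⪯ Y` and to `Y ⪯ e^{ε}X` gives both bounds.
-/

open Matrix

namespace Matrix

variable {R : Type*} {l m n : Type*} [Fintype m] [Fintype n]

structure IsMoorePenroseInverse [Ring R] [StarRing R] (A : Matrix m n R) (A' : Matrix n m R) :
    Prop where
  mul_pinv_mul : A * A' * A = A
  pinv_mul_pinv : A' * A * A' = A'
  isHermitian_pinv_mul : (A' * A).IsHermitian
  isHermitian_mul_pinv : (A * A').IsHermitian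

namespace IsMoorePenroseInverse

section Ring

variable [Ring R] [StarRing R] {A : Matrix m n R} {A' A'' : Matrix n m R}

theorem conjTranspose (hA' : IsMoorePenroseInverse A A') : IsMoorePenroseInverse Aᴴ A'ᴴ where
  mul_pinv_mul := by
    rw [← conjTranspose_mul, ← conjTranspose_mul, ← Matrix.mul_assoc, hA'.mul_pinv_mul]
  pinv_mul_pinv := by
    rw [← conjTranspose_mul, ← conjTranspose_mul, ← Matrix.mul_assoc, hA'.pinv_mul_pinv]
  isHermitian_pinv_mul := by
    rw [← conjTranspose_mul]; exact hA'.isHermitian_mul_pinv.conjTranspose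
  isHermitian_mul_pinv := by
    rw [← conjTranspose_mul]; exact hA'.isHermitian_pinv_mul.conjTranspose

theorem unique (hA' : IsMoorePenroseInverse A A') (hA'' : IsMoorePenroseInverse A A'') :
    A' = A'' := by
  have hleft : A * A' = A * A'' := calc
    A * A' = (A * A'' * A * A')ᴴ := by rw [hA''.mul_pinv_mul, hA'.isHermitian_mul_pinv.eq]
    _ = (A * A') * (A * A'') := by
      rw [Matrix.mul_assoc (A * A''), conjTranspose_mul, hA'.isHermitian_mul_pinv.eq,
        hA''.isHermitian_mul_pinv.eq]
    _ = A * A'' := by rw [← Matrix.mul_assoc, hA'.mul_pinv_mul]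
  have hright : A' * A = A'' * A := calc
    A' * A = (A' * A * (A'' * A))ᴴ := by
      rw [Matrix.mul_assoc A', ← Matrix.mul_assoc A, hA''.mul_pinv_mul,
        hA'.isHermitian_pinv_mul.eq]
    _ = (A'' * A) * (A' * A) := by
      rw [conjTranspose_mul, hA'.isHermitian_pinv_mul.eq,
        hA''.isHermitian_pinv_mul.eq]
    _ = A'' * A := by rw [Matrix.mul_assoc A'', ← Matrix.mul_assoc A, hA'.mul_pinv_mul]
  calc A' = A' * (A * A') := by rw [← Matrix.mul_assoc, hA'.pinv_mul_pinv]
    _ = A'' := by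
      rw [hleft, ← Matrix.mul_assoc, hright, hA''.pinv_mul_pinv]

theorem isHermitian {A : Matrix n n R} {A' : Matrix n n R} (hA' : IsMoorePenroseInverse A A')
    (hA : A.IsHermitian) : A'.IsHermitian := by
  have := hA'.conjTranspose
  rw [hA.eq] at this
  exact this.unique hA'

theorem mul_comm {A : Matrix n n R} {A' : Matrix n n R} (hA' : IsMoorePenroseInverse A A')
    (hA : A.IsHermitian) : A * A' = A' * A := by
  rw [← hA'.isHermitian_mul_pinv.eq, conjTranspose_mul, hA.eq, (hA'.isHermitian hA).eq]

theorem mul_pinv_mul_eq_of_ker_le (hA' : IsMoorePenroseInverse A A') {B : Matrix l n R}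
    (hker : ∀ v, A *ᵥ v = 0 → B *ᵥ v = 0) : B * (A' * A) = B := by
  refine ext_iff_mulVec.2 fun v => ?_
  have hv : A *ᵥ ((A' * A) *ᵥ v - v) = 0 := by
    rw [mulVec_sub, mulVec_mulVec, ← Matrix.mul_assoc, hA'.mul_pinv_mul, sub_self]
  rw [← sub_eq_zero, ← mulVec_mulVec, ← mulVec_sub]
  exact hker _ hv

theorem pinv_mul_eq_of_ker_eq [Fintype l] (hA' : IsMoorePenroseInverse A A') {B : Matrix l n R}
    {B' : Matrix n l R} (hB' : IsMoorePenroseInverse B B')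
    (hker : ∀ v, A *ᵥ v = 0 ↔ B *ᵥ v = 0) : A' * A = B' * B := by
  have hBA : A' * A * (B' * B) = A' * A := by
    rw [Matrix.mul_assoc, hB'.mul_pinv_mul_eq_of_ker_le fun v => (hker v).2]
  have hAB : B' * B * (A' * A) = B' * B := by
    rw [Matrix.mul_assoc, hA'.mul_pinv_mul_eq_of_ker_le fun v => (hker v).1]
  calc A' * A = (A' * A * (B' * B))ᴴ := by rw [hBA, hA'.isHermitian_pinv_mul.eq]
    _ = B' * B * (A' * A) := by
      rw [conjTranspose_mul, hA'.isHermitian_pinv_mul.eq, hB'.isHermitian_pinv_mul.eq]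
    _ = B' * B := hAB

end Ring

theorem smul [Field R] [StarRing R] {A : Matrix m n R} {A' : Matrix n m R}
    (hA' : IsMoorePenroseInverse A A') {c : R} (hc : c ≠ 0) :
    IsMoorePenroseInverse (c • A) (c⁻¹ • A') := by
  refine ⟨?_, ?_, ?_, ?_⟩ <;>
    simp only [Matrix.smul_mul, Matrix.mul_smul, smul_smul, mul_inv_cancel₀ hc,
      inv_mul_cancel₀ hc, one_smul, hA'.mul_pinv_mul, hA'.pinv_mul_pinv,
      hA'.isHermitian_pinv_mul, hA'.isHermitian_mul_pinv]

theorem posSemidef_sub_of_posSemidef_sub [Ring R] [PartialOrder R] [StarRing R] [AddLeftMono R]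
    {A B A' B' : Matrix n n R} (hA : A.PosSemidef) (hAB : (B - A).PosSemidef)
    (hA' : IsMoorePenroseInverse A A') (hB' : IsMoorePenroseInverse B B')
    (hproj : A' * A = B' * B) : (A' - B').PosSemidef := by
  have hB : B.IsHermitian := by simpa using hA.isHermitian.add hAB.isHermitian
  have hA'h := hA'.isHermitian hA.isHermitian
  have hB'h := hB'.isHermitian hB
  have hright : B' * A * A' = B' := by
    rw [Matrix.mul_assoc, hA'.mul_comm hA.isHermitian, hproj, ← hB'.mul_comm hB,
      ← Matrix.mul_assoc, hB'.pinv_mul_pinv]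
  have hleft : A' * A * B' = B' := by rw [hproj, hB'.pinv_mul_pinv]
  have hsum := (hA.conjTranspose_mul_mul_same (B' - A')).add (hAB.conjTranspose_mul_mul_same B')
  rw [conjTranspose_sub, hA'h.eq, hB'h.eq] at hsum
  convert hsum using 1
  simp only [sub_mul, mul_sub, hright, hleft, hA'.pinv_mul_pinv, hB'.pinv_mul_pinv]
  abel

end IsMoorePenroseInverse

end Matrix

/-- If X and Y are symmetric PSD n×n real matrices with the same kernel and
e^{-ε}·X ⪯ Y ⪯ e^{ε}·X, then e^{-ε}·X⁺ ⪯ Y⁺ ⪯ e^{ε}·X⁺. -/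
theorem pseudoinverse_spectral_approx {n : ℕ} (X Y Xp Yp : Matrix (Fin n) (Fin n) ℝ) (ε : ℝ)
    (hX : X.PosSemidef) (hY : Y.PosSemidef)
    (hker : ∀ v : Fin n → ℝ, X *ᵥ v = 0 ↔ Y *ᵥ v = 0)
    (hXp1 : X * Xp * X = X) (hXp2 : Xp * X * Xp = Xp)
    (hXp3 : (Xp * X)ᵀ = Xp * X) (hXp4 : (X * Xp)ᵀ = X * Xp)
    (hYp1 : Y * Yp * Y = Y) (hYp2 : Yp * Y * Yp = Yp)
    (hYp3 : (Yp * Y)ᵀ = Yp * Y) (hYp4 : (Y * Yp)ᵀ = Y * Yp)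
    (h1 : (Y - Real.exp (-ε) • X).PosSemidef)
    (h2 : (Real.exp ε • X - Y).PosSemidef) :
    (Yp - Real.exp (-ε) • Xp).PosSemidef ∧ (Real.exp ε • Xp - Yp).PosSemidef := by
  have hXp : IsMoorePenroseInverse X Xp := ⟨hXp1, hXp2, hXp3, hXp4⟩
  have hYp : IsMoorePenroseInverse Y Yp := ⟨hYp1, hYp2, hYp3, hYp4⟩
  have hscaled (c : ℝ) : IsMoorePenroseInverse (Real.exp c • X) ((Real.exp c)⁻¹ • Xp) :=
    hXp.smul (Real.exp_pos c).ne'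
  have hproj (c : ℝ) : (Real.exp c)⁻¹ • Xp * Real.exp c • X = Yp * Y := by
    rw [smul_mul_smul_comm, inv_mul_cancel₀ (Real.exp_pos c).ne', one_smul,
      hXp.pinv_mul_eq_of_ker_eq hYp hker]
  constructor
  · rw [Real.exp_neg]
    exact hYp.posSemidef_sub_of_posSemidef_sub hY h2 (hscaled ε) (hproj ε).symm
  · simpa [Real.exp_neg] using (hscaled (-ε)).posSemidef_sub_of_posSemidef_sub
      (hX.smul (Real.exp_pos (-ε)).le) h1 hYp (hproj (-ε))
end

section
/- Let L = I − M be the normalized Laplacian of an undirected, connected, regular, aperiodic multigraph on n vertices, where M is the random-walk transition matrix. Then L⁺ = (1/2)·(I − J + (I + M)(I − M²)⁺(I + M)), where J is the n×n matrix with every entry equal to 1/n. -/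
/-!
Write `L = 1 - M`, `S = 1 - M² = (1 + M) L` and let `J` be the averaging matrix. Since `ker L`
consists of the constants and `1 + M` is invertible, `J` is the orthogonal projection onto
`ker L = ker S`. For a symmetric matrix `A` with kernel projection `P`, the Penrose equations
force `A A⁺ = 1 - P` and `P A⁺ = 0`, and these two equations determine `A⁺`. A direct
computation, using `M J = J M = J`, shows that `B = (1 - J + (1 + M) S⁺ (1 + M)) / 2` satisfies
`L B = 1 - J` and `J B = 0`, hence `B = L⁺`.
-/

open Matrix

namespace Matrix

variable {m n R : Type*} [Fintype m] [Fintype n] [CommRing R]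

structure IsMoorePenroseInverse_s6 (A : Matrix m n R) (X : Matrix n m R) : Prop where
  mul_mul_left : A * X * A = A
  mul_mul_right : X * A * X = X
  isSymm_mul_left : (X * A).IsSymm
  isSymm_mul_right : (A * X).IsSymm

theorem IsMoorePenroseInverse_s6.transpose {A : Matrix m n R} {X : Matrix n m R}
    (hX : IsMoorePenroseInverse_s6 A X) : IsMoorePenroseInverse_s6 Aᵀ Xᵀ where
  mul_mul_left := by
    rw [← transpose_mul, ← transpose_mul, ← Matrix.mul_assoc, hX.mul_mul_left]
  mul_mul_right := by
    rw [← transpose_mul, ← transpose_mul, ← Matrix.mul_assoc, hX.mul_mul_right]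
  isSymm_mul_left := by rw [← transpose_mul]; exact hX.isSymm_mul_right.transpose
  isSymm_mul_right := by rw [← transpose_mul]; exact hX.isSymm_mul_left.transpose

section Projection

/-- For symmetric `A` over `ℝ`, this says that `P` is the orthogonal projection onto `ker A`. -/
structure IsKerProjection (A P : Matrix m m R) : Prop where
  isSymm : P.IsSymm
  mul_self : P * P = P
  mul_eq_zero : P * A = 0
  mulVec_eq_self : ∀ v, A *ᵥ v = 0 → P *ᵥ v = v

variable {A P X : Matrix m m R}

theorem IsKerProjection.mul_eq_self (hP : IsKerProjection A P) {Q : Matrix m n R}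
    (hQ : A * Q = 0) : P * Q = Q := by
  refine ext_iff_mulVec.2 fun w ↦ ?_
  rw [← mulVec_mulVec]
  exact hP.mulVec_eq_self _ (by rw [mulVec_mulVec, hQ, zero_mulVec])

theorem IsKerProjection.eq_of_mul_eq (hP : IsKerProjection A P) {X Y : Matrix m n R}
    (hA : A * X = A * Y) (hP' : P * X = P * Y) : X = Y := by
  have hD : P * (X - Y) = X - Y := hP.mul_eq_self (by rw [Matrix.mul_sub, hA, sub_self])
  rw [Matrix.mul_sub, hP', sub_self] at hD
  exact sub_eq_zero.mp hD.symm

variable [DecidableEq m]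

theorem IsKerProjection.isUnit_mul (hP : IsKerProjection A P) {C : Matrix m m R} (hC : IsUnit C)
    (hPC : Commute P C) : IsKerProjection (C * A) P where
  isSymm := hP.isSymm
  mul_self := hP.mul_self
  mul_eq_zero := by
    rw [← Matrix.mul_assoc, hPC.eq, Matrix.mul_assoc, hP.mul_eq_zero, Matrix.mul_zero]
  mulVec_eq_self v hv := hP.mulVec_eq_self v <| mulVec_injective_of_isUnit hC <| by
    rw [mulVec_mulVec, hv, mulVec_zero]

theorem IsMoorePenroseInverse_s6.mul_eq_one_sub (hA : A.IsSymm) (hP : IsKerProjection A P)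
    (hX : IsMoorePenroseInverse_s6 A X) : A * X = 1 - P := by
  set E := 1 - P - A * X
  have hEA : E * A = 0 := by
    rw [sub_mul, sub_mul, one_mul, hP.mul_eq_zero, hX.mul_mul_left, sub_zero, sub_self]
  have hE : E.IsSymm := by
    rw [IsSymm, transpose_sub, transpose_sub, transpose_one, hP.isSymm.eq,
      hX.isSymm_mul_right.eq]
  have hAE : A * E = 0 := by
    rw [← hA.eq, ← hE.eq, ← transpose_mul, hEA, transpose_zero]
  have hPE : P * E = 0 := by
    rw [mul_sub, mul_sub, mul_one, hP.mul_self, ← Matrix.mul_assoc, hP.mul_eq_zero,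
      Matrix.zero_mul, sub_self, sub_zero]
  exact (sub_eq_zero.mp ((hP.mul_eq_self hAE).symm.trans hPE)).symm

theorem IsMoorePenroseInverse_s6.proj_mul_eq_zero (hA : A.IsSymm) (hP : IsKerProjection A P)
    (hX : IsMoorePenroseInverse_s6 A X) : P * X = 0 := by
  have hXA : X * A = 1 - P := by
    rw [← hX.isSymm_mul_left.eq, transpose_mul, hA.eq]
    exact IsMoorePenroseInverse_s6.mul_eq_one_sub hA hP (hA.eq ▸ hX.transpose)
  rw [← hX.mul_mul_right, hXA, ← Matrix.mul_assoc, mul_sub, mul_one, hP.mul_self, sub_self,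
    Matrix.zero_mul]

end Projection

section Averaging

variable (ι K : Type*) [Fintype ι] [Field K]

def averaging : Matrix ι ι K := of fun _ _ ↦ (Fintype.card ι : K)⁻¹

variable {ι K}

theorem averaging_isSymm : (averaging ι K).IsSymm := rfl

theorem mul_averaging {M : Matrix ι ι K} (hM : ∀ i, ∑ j, M i j = 1) :
    M * averaging ι K = averaging ι K := by
  ext i j
  simp [averaging, mul_apply, ← Finset.sum_mul, hM]

theorem averaging_mul {M : Matrix ι ι K} (hM : ∀ j, ∑ i, M i j = 1) :
    averaging ι K * M = averaging ι K := by
  ext i j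
  simp [averaging, mul_apply, ← Finset.mul_sum, hM]

variable [CharZero K]

theorem averaging_mulVec_const (c : K) : averaging ι K *ᵥ (fun _ ↦ c) = fun _ ↦ c := by
  ext i
  have : Nonempty ι := ⟨i⟩
  simp [averaging, mulVec, dotProduct]

theorem averaging_mul_self : averaging ι K * averaging ι K = averaging ι K := by
  ext i j
  have : Nonempty ι := ⟨i⟩
  simp [averaging, mul_apply]

theorem isKerProjection_averaging {A : Matrix ι ι K}
    (hA : averaging ι K * A = 0) (hker : ∀ v, A *ᵥ v = 0 → ∃ c, v = fun _ ↦ c) :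
    IsKerProjection A (averaging ι K) where
  isSymm := averaging_isSymm
  mul_self := averaging_mul_self
  mul_eq_zero := hA
  mulVec_eq_self v hv := by
    obtain ⟨c, rfl⟩ := hker v hv
    exact averaging_mulVec_const c

end Averaging

end Matrix

theorem laplacian_pseudoinverse_identity_general {n : ℕ}
    (M Lp Sp : Matrix (Fin n) (Fin n) ℝ)
    (hMsym : Mᵀ = M)
    (hMrow : ∀ i, ∑ j, M i j = 1)
    (haperiodic : ((1 : Matrix (Fin n) (Fin n) ℝ) + M).PosDef)
    (hker : ∀ v : Fin n → ℝ, ((1 : Matrix (Fin n) (Fin n) ℝ) - M) *ᵥ v = 0 ↔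
      ∃ c : ℝ, v = fun _ => c)
    -- Lp is the Moore–Penrose pseudoinverse of L = I − M
    (hp1 : (1 - M) * Lp * (1 - M) = 1 - M) (hp2 : Lp * (1 - M) * Lp = Lp)
    (hp3 : (Lp * (1 - M))ᵀ = Lp * (1 - M)) (hp4 : ((1 - M) * Lp)ᵀ = (1 - M) * Lp)
    -- Sp is the Moore–Penrose pseudoinverse of I − M²
    (hs1 : (1 - M * M) * Sp * (1 - M * M) = 1 - M * M)
    (hs2 : Sp * (1 - M * M) * Sp = Sp)
    (hs3 : (Sp * (1 - M * M))ᵀ = Sp * (1 - M * M))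
    (hs4 : ((1 - M * M) * Sp)ᵀ = (1 - M * M) * Sp)
    (J : Matrix (Fin n) (Fin n) ℝ) (hJ : J = fun _ _ => (1 : ℝ) / n) :
    Lp = (1 / 2 : ℝ) • (1 - J + (1 + M) * Sp * (1 + M)) := by
  have hJavg : J = averaging (Fin n) ℝ := by
    rw [hJ, averaging, Fintype.card_fin, ← one_div]; rfl
  have hMJ : M * J = J := hJavg ▸ mul_averaging hMrow
  have hJM : J * M = J := hJavg ▸ averaging_mul fun j ↦
    (Finset.sum_congr rfl fun i _ ↦ IsSymm.apply hMsym j i).trans (hMrow j)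
  have hL : (1 - M).IsSymm := isSymm_one.sub hMsym
  have hS : (1 - M * M).IsSymm := isSymm_one.sub (by rw [IsSymm, transpose_mul, hMsym])
  have hJL : IsKerProjection (1 - M) J :=
    hJavg ▸ isKerProjection_averaging (by rw [← hJavg, mul_sub, mul_one, hJM, sub_self])
      fun v ↦ (hker v).1
  have hJS : IsKerProjection (1 - M * M) J := by
    rw [show 1 - M * M = (1 + M) * (1 - M) by noncomm_ring]
    exact hJL.isUnit_mul haperiodic.isUnit <| by
      rw [Commute, SemiconjBy, mul_add, add_mul, mul_one, one_mul, hMJ, hJM]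
  have hLp : IsMoorePenroseInverse_s6 (1 - M) Lp := ⟨hp1, hp2, hp3, hp4⟩
  have hSp : IsMoorePenroseInverse_s6 (1 - M * M) Sp := ⟨hs1, hs2, hs3, hs4⟩
  refine hJL.eq_of_mul_eq ?_ ?_
  · rw [hLp.mul_eq_one_sub hL hJL, Matrix.mul_smul, mul_add, ← Matrix.mul_assoc,
      ← Matrix.mul_assoc, show (1 - M) * (1 + M) = 1 - M * M by noncomm_ring,
      hSp.mul_eq_one_sub hS hJS]
    simp only [mul_sub, sub_mul, mul_add, mul_one, one_mul, hMJ, hJM]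
    module
  · rw [hLp.proj_mul_eq_zero hL hJL, Matrix.mul_smul, mul_add, mul_sub, mul_one, hJL.mul_self,
      sub_self, zero_add, ← Matrix.mul_assoc, ← Matrix.mul_assoc, mul_add J, mul_one, hJM,
      add_mul, hSp.proj_mul_eq_zero hS hJS, add_zero, Matrix.zero_mul, smul_zero]

/-- Peng–Spielman identity: if L = I − M is the normalized Laplacian of a connected,
regular, aperiodic multigraph (M symmetric doubly stochastic, eigenvalue 1 only on the
all-ones vector, −1 not an eigenvalue), then
L⁺ = (1/2)·(I − J + (I + M)(I − M²)⁺(I + M)). -/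
theorem laplacian_pseudoinverse_identity {n : ℕ} (hn : 0 < n)
    (M Lp Sp : Matrix (Fin n) (Fin n) ℝ)
    (hMsym : Mᵀ = M)
    (hMnn : ∀ i j, 0 ≤ M i j) (hMrow : ∀ i, ∑ j, M i j = 1)
    (hpsd : ((1 : Matrix (Fin n) (Fin n) ℝ) - M).PosSemidef)
    (haperiodic : ((1 : Matrix (Fin n) (Fin n) ℝ) + M).PosDef)
    (hker : ∀ v : Fin n → ℝ, ((1 : Matrix (Fin n) (Fin n) ℝ) - M) *ᵥ v = 0 ↔
      ∃ c : ℝ, v = fun _ => c)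
    -- Lp is the Moore–Penrose pseudoinverse of L = I − M
    (hp1 : (1 - M) * Lp * (1 - M) = 1 - M) (hp2 : Lp * (1 - M) * Lp = Lp)
    (hp3 : (Lp * (1 - M))ᵀ = Lp * (1 - M)) (hp4 : ((1 - M) * Lp)ᵀ = (1 - M) * Lp)
    -- Sp is the Moore–Penrose pseudoinverse of I − M²
    (hs1 : (1 - M * M) * Sp * (1 - M * M) = 1 - M * M)
    (hs2 : Sp * (1 - M * M) * Sp = Sp)
    (hs3 : (Sp * (1 - M * M))ᵀ = Sp * (1 - M * M))
    (hs4 : ((1 - M * M) * Sp)ᵀ = (1 - M * M) * Sp)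
    (J : Matrix (Fin n) (Fin n) ℝ) (hJ : J = fun _ _ => (1 : ℝ) / n) :
    Lp = (1 / 2 : ℝ) • (1 - J + (1 + M) * Sp * (1 + M)) :=
  laplacian_pseudoinverse_identity_general M Lp Sp hMsym hMrow haperiodic hker hp1 hp2 hp3 hp4 hs1
    hs2 hs3 hs4 J hJ
end

section
/- Let A, P be symmetric positive definite n×n real matrices with (1 − ε)·P⁻¹ ⪯ A ⪯ P⁻¹ for some ε ∈ (0,1). Then for every k > 0, the matrix P_k = Σ_{i=0}^{k} P(I − AP)^i is symmetric and satisfies (1 − ε^{k+1}/(1 − ε))·A⁻¹ ⪯ P_k ⪯ A⁻¹. -/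
/-!
Put `q = √P` and `N = 1 - q A q`. Conjugating the two hypotheses by `q` (note `q P⁻¹ q = 1`) gives
exactly `0 ≤ N ≤ ε`, and the identity `P (1 - A P)^i = q N^i q` turns `P_k` into
`q (∑_{i ≤ k} N^i) q` and `A⁻¹` into `q (1 - N)⁻¹ q`. For `0 ≤ x ≤ ε < 1` the scalar
`∑_{i ≤ k} x^i = (1 - x^{k+1}) / (1 - x)` lies between `(1 - ε^{k+1}) / (1 - x)` and `1 / (1 - x)`,
so the continuous functional calculus of `N` yields
`(1 - ε^{k+1}) (1 - N)⁻¹ ≤ ∑ N^i ≤ (1 - N)⁻¹`, and conjugating back by `q` gives the bounds,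
even with the sharper constant `1 - ε^{k+1}`.
-/

open Finset Matrix

section CFC

variable {𝔸 : Type*} [TopologicalSpace 𝔸] [Ring 𝔸] [StarRing 𝔸] [Algebra ℝ 𝔸]
  [ContinuousFunctionalCalculus ℝ 𝔸 IsSelfAdjoint]

lemma cfc_geom_sum (a : 𝔸) (n : ℕ) (ha : IsSelfAdjoint a := by cfc_tac) :
    cfc (fun x : ℝ => ∑ i ∈ range n, x ^ i) a = ∑ i ∈ range n, a ^ i := by
  rw [← Finset.sum_fn, cfc_sum _ a _ fun i _ => by fun_prop]
  exact sum_congr rfl fun i _ => cfc_pow_id a i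

lemma cfc_inv_one_sub {a : 𝔸} (h : ∀ x ∈ spectrum ℝ a, x ≠ 1)
    (ha : IsSelfAdjoint a := by cfc_tac) :
    cfc (fun x : ℝ => (1 - x)⁻¹) a = Ring.inverse (1 - a) := by
  rw [cfc_inv (fun x : ℝ => 1 - x) a fun x hx => sub_ne_zero.mpr (h x hx).symm, cfc_sub ..,
    cfc_const_one .., cfc_id' ..]

variable [PartialOrder 𝔸] [StarOrderedRing 𝔸] [NonnegSpectrumClass ℝ 𝔸] {a : 𝔸} {ε : ℝ}

lemma spectrum_subset_Icc_of_nonneg_of_le_algebraMap (h₀ : 0 ≤ a)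
    (hε : a ≤ algebraMap ℝ 𝔸 ε) : spectrum ℝ a ⊆ Set.Icc 0 ε := fun x hx =>
  ⟨spectrum_nonneg_of_nonneg h₀ hx,
    (le_algebraMap_iff_spectrum_le (IsSelfAdjoint.of_nonneg h₀)).mp hε x hx⟩

lemma geom_sum_mem_Icc (h₀ : 0 ≤ a) (hε : a ≤ algebraMap ℝ 𝔸 ε) (hε₁ : ε < 1) (n : ℕ) :
    ∑ i ∈ range n, a ^ i ∈
      Set.Icc ((1 - ε ^ n) • Ring.inverse (1 - a)) (Ring.inverse (1 - a)) := by
  have hspec := spectrum_subset_Icc_of_nonneg_of_le_algebraMap h₀ hε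
  have hlt : ∀ x ∈ spectrum ℝ a, x < 1 := fun x hx => (hspec hx).2.trans_lt hε₁
  have ha := IsSelfAdjoint.of_nonneg h₀
  have hcont : ContinuousOn (fun x : ℝ => (1 - x)⁻¹) (spectrum ℝ a) :=
    (continuousOn_const.sub continuousOn_id).inv₀ fun x hx => (sub_pos.2 (hlt x hx)).ne'
  have hsum : ∀ x ∈ spectrum ℝ a, ∑ i ∈ range n, x ^ i = (1 - x ^ n) * (1 - x)⁻¹ := fun x hx =>
    (eq_mul_inv_iff_mul_eq₀ (sub_pos.2 (hlt x hx)).ne').2 (geom_sum_mul_neg x n)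
  rw [← cfc_geom_sum a n, ← cfc_inv_one_sub fun x hx => (hlt x hx).ne, ← cfc_smul ..]
  constructor
  · refine cfc_mono (fun x hx => ?_) (hcont.const_smul (1 - ε ^ n)) (by fun_prop)
    rw [hsum x hx, smul_eq_mul]
    have hx₁ := sub_pos.2 (hlt x hx)
    gcongr
    exacts [(hspec hx).1, (hspec hx).2]
  · refine cfc_mono (fun x hx => ?_) (by fun_prop) hcont
    rw [hsum x hx]
    exact mul_le_of_le_one_left (inv_nonneg.2 (sub_pos.2 (hlt x hx)).le)
      (by linarith [pow_nonneg (hspec hx).1 n])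

end CFC

section Ring

variable {R : Type*} [Ring R]

lemma mul_one_sub_mul_pow_of_mul_self_eq {a p q : R} (hq : q * q = p) (i : ℕ) :
    p * (1 - a * p) ^ i = q * (1 - q * a * q) ^ i * q := by
  induction i with
  | zero => simp [hq]
  | succ i ih =>
    rw [pow_succ, ← mul_assoc, ih, pow_succ, ← hq]
    simp only [mul_assoc, mul_sub, sub_mul, mul_one]

lemma Ring.inverse_eq_mul_inverse_mul_mul {q : R} (hq : IsUnit q) (a : R) :
    Ring.inverse a = q * Ring.inverse (q * a * q) * q := by
  rw [Ring.inverse_mul (.inr hq), Ring.inverse_mul (.inl hq), ← mul_assoc, ← mul_assoc,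
    Ring.mul_inverse_cancel q hq, one_mul, mul_assoc, Ring.inverse_mul_cancel q hq, mul_one]

def richardsonSum (a p : R) (k : ℕ) : R :=
  ∑ i ∈ range (k + 1), p * (1 - a * p) ^ i

end Ring

section Richardson

variable {𝔸 : Type*} [PartialOrder 𝔸] [Ring 𝔸] [StarRing 𝔸] [TopologicalSpace 𝔸]
  [StarOrderedRing 𝔸] [Algebra ℝ 𝔸] [ContinuousFunctionalCalculus ℝ 𝔸 IsSelfAdjoint]
  [NonnegSpectrumClass ℝ 𝔸] [IsSemitopologicalRing 𝔸] [T2Space 𝔸]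

theorem isSelfAdjoint_richardsonSum_and_mem_Icc {a p : 𝔸} {ε : ℝ} (hp : IsStrictlyPositive p)
    (h₁ : a ≤ Ring.inverse p) (h₂ : (1 - ε) • Ring.inverse p ≤ a) (hε : ε < 1) (k : ℕ) :
    IsSelfAdjoint (richardsonSum a p k) ∧
      richardsonSum a p k ∈ Set.Icc ((1 - ε ^ (k + 1)) • Ring.inverse a) (Ring.inverse a) := by
  set q := CFC.sqrt p
  have hqq : q * q = p := CFC.sqrt_mul_sqrt_self p
  have hq : IsSelfAdjoint q := IsSelfAdjoint.of_nonneg (CFC.sqrt_nonneg p)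
  have hqu : IsUnit q := CFC.isUnit_sqrt_iff_isStrictlyPositive.mpr hp
  set N := 1 - q * a * q
  have hpinv : q * Ring.inverse p * q = 1 := by
    simpa only [mul_one, hqq, Ring.inverse_one] using
      (Ring.inverse_eq_mul_inverse_mul_mul hqu 1).symm
  have hN₀ : 0 ≤ N := by
    have := star_left_conjugate_le_conjugate h₁ q
    rw [hq.star_eq, hpinv] at this
    exact sub_nonneg.mpr this
  have hNε : N ≤ algebraMap ℝ 𝔸 ε := by
    have := star_left_conjugate_le_conjugate h₂ q
    rw [hq.star_eq, mul_smul_comm, smul_mul_assoc, hpinv] at this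
    calc N ≤ 1 - (1 - ε) • 1 := sub_le_sub_left this 1
      _ = algebraMap ℝ 𝔸 ε := by
        rw [sub_smul, one_smul, sub_sub_cancel, Algebra.algebraMap_eq_smul_one]
  have hsum : richardsonSum a p k = q * (∑ i ∈ range (k + 1), N ^ i) * q := by
    simp only [richardsonSum, mul_one_sub_mul_pow_of_mul_self_eq hqq, mul_sum, sum_mul]
    rfl
  have hinv : Ring.inverse a = q * Ring.inverse (1 - N) * q := by
    rw [sub_sub_cancel, ← Ring.inverse_eq_mul_inverse_mul_mul hqu]
  obtain ⟨hge, hle⟩ := geom_sum_mem_Icc hN₀ hNε hε (k + 1)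
  rw [hsum, hinv]
  refine ⟨?_, ?_, ?_⟩
  · simpa only [hq.star_eq] using
      (isSelfAdjoint_sum _ fun i _ => (IsSelfAdjoint.of_nonneg hN₀).pow i).conjugate' q
  · rw [← smul_mul_assoc, ← mul_smul_comm]
    simpa only [hq.star_eq] using star_left_conjugate_le_conjugate hge q
  · simpa only [hq.star_eq] using star_left_conjugate_le_conjugate hle q

end Richardson

theorem richardson_iteration_general {n : ℕ} (A P : Matrix (Fin n) (Fin n) ℝ) (ε : ℝ) (k : ℕ)
    (hA : A.PosDef) (hP : P.PosDef) (hε : 0 < ε) (hε1 : ε < 1)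
    (h1 : (P⁻¹ - A).PosSemidef)
    (h2 : (A - (1 - ε) • P⁻¹).PosSemidef) :
    let Pk : Matrix (Fin n) (Fin n) ℝ := ∑ i ∈ Finset.range (k + 1), P * (1 - A * P) ^ i
    Pkᵀ = Pk ∧ (A⁻¹ - Pk).PosSemidef ∧
      (Pk - (1 - ε ^ (k + 1) / (1 - ε)) • A⁻¹).PosSemidef := by
  open scoped MatrixOrder in
  obtain ⟨hsa, hge, hle⟩ := isSelfAdjoint_richardsonSum_and_mem_Icc (a := A) hP.isStrictlyPositive
    (by rwa [← nonsing_inv_eq_ringInverse]) (by rwa [← nonsing_inv_eq_ringInverse]) hε1 k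
  rw [← nonsing_inv_eq_ringInverse] at hle hge
  have hconst : 1 - ε ^ (k + 1) / (1 - ε) ≤ 1 - ε ^ (k + 1) :=
    sub_le_sub_left (le_div_self (by positivity) (by linarith) (by linarith)) 1
  refine ⟨(conjTranspose_eq_transpose_of_trivial _).symm.trans hsa, hle, ?_⟩
  open scoped MatrixOrder in
  exact le_trans (smul_le_smul_of_nonneg_right hconst hA.inv.posSemidef.nonneg) hge

/-- Preconditioned Richardson iteration: if (1−ε)P⁻¹ ⪯ A ⪯ P⁻¹ for symmetric positive
definite A, P and ε ∈ (0,1), then P_k = Σ_{i=0}^{k} P(I − AP)^i is symmetric and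
(1 − ε^{k+1}/(1−ε))·A⁻¹ ⪯ P_k ⪯ A⁻¹. -/
theorem richardson_iteration {n : ℕ} (A P : Matrix (Fin n) (Fin n) ℝ) (ε : ℝ) (k : ℕ)
    (hA : A.PosDef) (hP : P.PosDef) (hε : 0 < ε) (hε1 : ε < 1) (hk : 0 < k)
    (h1 : (P⁻¹ - A).PosSemidef)
    (h2 : (A - (1 - ε) • P⁻¹).PosSemidef) :
    let Pk : Matrix (Fin n) (Fin n) ℝ := ∑ i ∈ Finset.range (k + 1), P * (1 - A * P) ^ i
    Pkᵀ = Pk ∧ (A⁻¹ - Pk).PosSemidef ∧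
      (Pk - (1 - ε ^ (k + 1) / (1 - ε)) • A⁻¹).PosSemidef :=
  richardson_iteration_general A P ε k hA hP hε hε1 h1 h2
end

section
/- Let G be a d-regular undirected multigraph with second eigenvalue λ(G) = λ and H a c-regular graph on d vertices with λ(H) = μ. Then the derandomized square G ⓢ H is a (d·c)-regular undirected multigraph with λ(G ⓢ H) ≤ 1 − (1 − λ²)(1 − μ) ≤ λ² + μ. -/
/-!
Split the transition matrix of `H` as `B = (1 - μ) J / d + E`, where `J` is the all-ones
matrix: `B` fixes the constant vector and shrinks its orthogonal complement by `μ`, so `E`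
has norm at most `μ` on all of `ℝ^d`. Since `I ⊗ J / d = Q P`, the derandomized square
becomes `M̃ = (1 - μ) M_G² + P Ã (I ⊗ E) Ã Q`. On vectors orthogonal to `1` the first
term has norm at most `(1 - μ) λ²`, and the second at most `μ`, because `Ã` is a
permutation and `‖P‖² = d = 1 / ‖Q‖²`. Adding up gives `(1 - μ) λ² + μ = 1 - (1 - λ²)(1 - μ)`.
-/

open Matrix Finset
open scoped Kronecker

section DotProduct

variable {ι : Type*} [Fintype ι]

theorem dotProduct_self_add_le {a b v : ι → ℝ} {α β : ℝ} (hα : 0 ≤ α) (hβ : 0 ≤ β)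
    (ha : a ⬝ᵥ a ≤ α ^ 2 * (v ⬝ᵥ v)) (hb : b ⬝ᵥ b ≤ β ^ 2 * (v ⬝ᵥ v)) :
    (a + b) ⬝ᵥ (a + b) ≤ (α + β) ^ 2 * (v ⬝ᵥ v) := by
  have hv := dotProduct_self_star_nonneg v
  have cauchy_schwarz : (a ⬝ᵥ b) ^ 2 ≤ (a ⬝ᵥ a) * (b ⬝ᵥ b) := by
    simpa only [dotProduct, sq] using sum_mul_sq_le_sq_mul_sq univ a b
  have hab : a ⬝ᵥ b ≤ α * β * (v ⬝ᵥ v) := by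
    refine le_of_sq_le_sq (cauchy_schwarz.trans ?_) (by positivity)
    calc (a ⬝ᵥ a) * (b ⬝ᵥ b) ≤ (α ^ 2 * (v ⬝ᵥ v)) * (β ^ 2 * (v ⬝ᵥ v)) :=
          mul_le_mul ha hb (dotProduct_self_star_nonneg b) (by positivity)
      _ = (α * β * (v ⬝ᵥ v)) ^ 2 := by ring
  have expand : (a + b) ⬝ᵥ (a + b) = a ⬝ᵥ a + 2 * (a ⬝ᵥ b) + b ⬝ᵥ b := by
    rw [add_dotProduct, dotProduct_add, dotProduct_add, dotProduct_comm b a]; ring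
  rw [expand]
  nlinarith

theorem dotProduct_self_add_smul_one {w : ι → ℝ} (hw : ∑ i, w i = 0) (c : ℝ) :
    (w + c • 1) ⬝ᵥ (w + c • 1) = w ⬝ᵥ w + Fintype.card ι * c ^ 2 := by
  rw [add_dotProduct, dotProduct_add, dotProduct_add, smul_dotProduct, smul_dotProduct,
    dotProduct_smul, dotProduct_smul, dotProduct_one, one_dotProduct, one_dotProduct_one, hw]
  simp only [smul_eq_mul]
  ring

theorem smul_dotProduct_smul_self (c : ℝ) (x : ι → ℝ) :
    (c • x) ⬝ᵥ (c • x) = c ^ 2 * (x ⬝ᵥ x) := by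
  rw [smul_dotProduct, dotProduct_smul, smul_eq_mul, smul_eq_mul, ← mul_assoc, sq]

theorem sum_mulVec_of_one_vecMul {κ : Type*} [Fintype κ] {M : Matrix κ ι ℝ} (hM : 1 ᵥ* M = 1)
    (v : ι → ℝ) : ∑ i, (M *ᵥ v) i = ∑ i, v i := by
  rw [← one_dotProduct, dotProduct_mulVec, hM, one_dotProduct]

theorem dotProduct_mul_self_mulVec_le {W : Matrix ι ι ℝ} (hW : 1 ᵥ* W = 1) {lam : ℝ}
    (hG : ∀ v : ι → ℝ, ∑ i, v i = 0 → (W *ᵥ v) ⬝ᵥ (W *ᵥ v) ≤ lam ^ 2 * (v ⬝ᵥ v))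
    (v : ι → ℝ) (hv : ∑ i, v i = 0) :
    ((W * W) *ᵥ v) ⬝ᵥ ((W * W) *ᵥ v) ≤ (lam ^ 2) ^ 2 * (v ⬝ᵥ v) := by
  have hWv : ∑ i, (W *ᵥ v) i = 0 := by rw [sum_mulVec_of_one_vecMul hW, hv]
  rw [← mulVec_mulVec, sq (lam ^ 2), mul_assoc]
  exact (hG _ hWv).trans (by gcongr; exact hG v hv)

end DotProduct

theorem Matrix.mul_apply_nonneg {l m o : Type*} [Fintype m] {A : Matrix l m ℝ} {C : Matrix m o ℝ}
    (hA : ∀ i j, 0 ≤ A i j) (hC : ∀ i j, 0 ≤ C i j) (i : l) (j : o) : 0 ≤ (A * C) i j :=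
  Finset.sum_nonneg fun k _ => mul_nonneg (hA i k) (hC k j)

section Kronecker

variable {V D : Type*} [Fintype V] [Fintype D] [DecidableEq V]

theorem one_kronecker_mulVec_apply (C : Matrix D D ℝ) (x : V × D → ℝ) (p : V × D) :
    ((1 : Matrix V V ℝ) ⊗ₖ C *ᵥ x) p = (C *ᵥ fun j => x (p.1, j)) p.2 := by
  simp [mulVec, dotProduct, Fintype.sum_prod_type, one_apply, ite_mul]

theorem dotProduct_one_kronecker_mulVec_le {C : Matrix D D ℝ} {c : ℝ}
    (hC : ∀ z, (C *ᵥ z) ⬝ᵥ (C *ᵥ z) ≤ c * (z ⬝ᵥ z)) (x : V × D → ℝ) :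
    ((1 : Matrix V V ℝ) ⊗ₖ C *ᵥ x) ⬝ᵥ ((1 : Matrix V V ℝ) ⊗ₖ C *ᵥ x) ≤ c * (x ⬝ᵥ x) := by
  have hblock := fun v => hC fun j => x (v, j)
  simp only [dotProduct, Fintype.sum_prod_type, one_kronecker_mulVec_apply, mul_sum] at hblock ⊢
  exact sum_le_sum fun v _ => hblock v

theorem one_vecMul_one_kronecker {B : Matrix D D ℝ} (hcol : ∀ j, ∑ i, B i j = 1) :
    1 ᵥ* ((1 : Matrix V V ℝ) ⊗ₖ B) = 1 := by
  ext q
  simp [vecMul, dotProduct, Fintype.sum_prod_type, one_apply, hcol]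

end Kronecker

theorem dotProduct_sub_smul_allOnes_mulVec_le {D : Type*} [Fintype D] [Nonempty D]
    {B : Matrix D D ℝ} (hrow : ∀ i, ∑ j, B i j = 1) (hcol : ∀ j, ∑ i, B i j = 1) {μ : ℝ}
    (hB : ∀ w : D → ℝ, ∑ i, w i = 0 → (B *ᵥ w) ⬝ᵥ (B *ᵥ w) ≤ μ ^ 2 * (w ⬝ᵥ w)) (z : D → ℝ) :
    let E := B - ((1 - μ) / Fintype.card D) • of fun _ _ => 1
    (E *ᵥ z) ⬝ᵥ (E *ᵥ z) ≤ μ ^ 2 * (z ⬝ᵥ z) := by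
  intro E
  have hd : (Fintype.card D : ℝ) ≠ 0 := Nat.cast_ne_zero.2 Fintype.card_ne_zero
  obtain ⟨w, s, hw, rfl⟩ : ∃ (w : D → ℝ) (s : ℝ), ∑ i, w i = 0 ∧ z = w + s • 1 := by
    refine ⟨z - ((∑ i, z i) / Fintype.card D) • 1, (∑ i, z i) / Fintype.card D, ?_, by simp⟩
    simp [Finset.sum_sub_distrib, mul_div_cancel₀ _ hd]
  have hBw : ∑ i, (B *ᵥ w) i = 0 := by
    rw [sum_mulVec_of_one_vecMul (by ext j; simp [vecMul, dotProduct, hcol]), hw]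
  have hB1 : B *ᵥ 1 = 1 := by ext i; simp [mulVec, dotProduct, hrow]
  have hJ (x : D → ℝ) : (of fun _ _ => 1 : Matrix D D ℝ) *ᵥ x = (∑ i, x i) • 1 := by
    ext; simp [mulVec, dotProduct]
  have hEz : E *ᵥ (w + s • 1) = B *ᵥ w + (μ * s) • 1 := by
    rw [sub_mulVec, smul_mulVec, mulVec_add, mulVec_add, mulVec_smul, mulVec_smul, hB1, hJ, hJ, hw]
    ext i
    simp only [zero_smul, zero_add, Pi.one_apply, sum_const, card_univ, nsmul_eq_mul, mul_one,
      Pi.sub_apply, Pi.add_apply, Pi.smul_apply, smul_eq_mul]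
    field_simp
    ring
  rw [hEz, dotProduct_self_add_smul_one hBw, dotProduct_self_add_smul_one hw]
  linarith [hB w hw]

section Permutation

variable {ι : Type*} [DecidableEq ι] (σ : Equiv.Perm ι)

theorem permMatrix_nonneg (i j : ι) : 0 ≤ σ.permMatrix ℝ i j := by
  simp only [Equiv.Perm.permMatrix, PEquiv.toMatrix_apply]
  split_ifs <;> norm_num

variable [Fintype ι]

theorem dotProduct_permMatrix_mulVec (x : ι → ℝ) :
    (σ.permMatrix ℝ *ᵥ x) ⬝ᵥ (σ.permMatrix ℝ *ᵥ x) = x ⬝ᵥ x := by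
  rw [permMatrix_mulVec]
  exact Equiv.sum_comp σ fun i => x i * x i

theorem one_vecMul_permMatrix : 1 ᵥ* σ.permMatrix ℝ = 1 := by
  rw [vecMul_permMatrix]
  rfl

end Permutation

section Cloud

variable (V D : Type*) [DecidableEq V]

/- The matrices `P` and `Q` of the derandomized square; the cloud of a vertex `v` is `{v} × D`. -/
def cloudProj : Matrix V (V × D) ℝ := of fun v p => if p.1 = v then 1 else 0

noncomputable def cloudLift [Fintype D] : Matrix (V × D) V ℝ :=
  (Fintype.card D : ℝ)⁻¹ • (cloudProj V D)ᵀ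

variable {V D}

theorem cloudProj_nonneg (v : V) (p : V × D) : 0 ≤ cloudProj V D v p := by
  simp only [cloudProj, of_apply]
  split_ifs <;> norm_num

theorem cloudLift_nonneg [Fintype D] (p : V × D) (v : V) : 0 ≤ cloudLift V D p v := by
  simp only [cloudLift, Matrix.smul_apply, transpose_apply, smul_eq_mul]
  exact mul_nonneg (by positivity) (cloudProj_nonneg v p)

variable [Fintype V]

theorem one_vecMul_cloudProj : 1 ᵥ* cloudProj V D = 1 := by
  ext p
  simp [cloudProj, vecMul, dotProduct]

variable [Fintype D]

theorem cloudProj_mulVec (x : V × D → ℝ) : cloudProj V D *ᵥ x = fun v => ∑ i, x (v, i) := by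
  ext v
  simp [cloudProj, mulVec, dotProduct, Fintype.sum_prod_type_right]

theorem cloudLift_mulVec (v : V → ℝ) :
    cloudLift V D *ᵥ v = fun p => (Fintype.card D : ℝ)⁻¹ * v p.1 := by
  ext p
  simp [cloudLift, cloudProj, mulVec, dotProduct]

theorem one_vecMul_cloudLift [Nonempty D] : 1 ᵥ* cloudLift V D = 1 := by
  ext v
  simp [cloudLift, cloudProj, vecMul, dotProduct, Fintype.sum_prod_type_right]

theorem cloudLift_mul_cloudProj :
    cloudLift V D * cloudProj V D =
      (1 : Matrix V V ℝ) ⊗ₖ ((Fintype.card D : ℝ)⁻¹ • of fun _ _ => 1) := by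
  ext p q
  simp [cloudLift, cloudProj, mul_apply, one_apply]

theorem dotProduct_cloudProj_mulVec_le (x : V × D → ℝ) :
    (cloudProj V D *ᵥ x) ⬝ᵥ (cloudProj V D *ᵥ x) ≤ Fintype.card D * (x ⬝ᵥ x) := by
  simp only [cloudProj_mulVec, dotProduct, Fintype.sum_prod_type, ← sq]
  rw [mul_sum]
  gcongr with v
  simpa using sq_sum_le_card_mul_sum_sq (s := univ) (f := fun i => x (v, i))

theorem dotProduct_cloudLift_mulVec (v : V → ℝ) :
    (cloudLift V D *ᵥ v) ⬝ᵥ (cloudLift V D *ᵥ v) = (Fintype.card D : ℝ)⁻¹ * (v ⬝ᵥ v) := by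
  simp only [cloudLift_mulVec, dotProduct, Fintype.sum_prod_type, sum_const, card_univ,
    nsmul_eq_mul, mul_sum]
  refine sum_congr rfl fun v _ => ?_
  field_simp

theorem dotProduct_cloudProj_mul_mul_cloudLift_mulVec_le [Nonempty D]
    {T : Matrix (V × D) (V × D) ℝ} {c : ℝ}
    (hT : ∀ x, (T *ᵥ x) ⬝ᵥ (T *ᵥ x) ≤ c * (x ⬝ᵥ x)) (v : V → ℝ) :
    ((cloudProj V D * T * cloudLift V D) *ᵥ v) ⬝ᵥ ((cloudProj V D * T * cloudLift V D) *ᵥ v) ≤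
      c * (v ⬝ᵥ v) := by
  rw [← mulVec_mulVec, ← mulVec_mulVec]
  calc _ ≤ Fintype.card D * ((T *ᵥ cloudLift V D *ᵥ v) ⬝ᵥ (T *ᵥ cloudLift V D *ᵥ v)) :=
        dotProduct_cloudProj_mulVec_le _
    _ ≤ Fintype.card D * (c * ((Fintype.card D : ℝ)⁻¹ * (v ⬝ᵥ v))) := by
        rw [← dotProduct_cloudLift_mulVec]
        gcongr
        exact hT _
    _ = c * (v ⬝ᵥ v) := by
        field_simp

end Cloud

section DerandomizedSquare

variable {V D : Type*} [Fintype V] [DecidableEq V] [Fintype D] [DecidableEq D]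
  (σ : Equiv.Perm (V × D))

noncomputable def rotWalkMatrix : Matrix V V ℝ :=
  cloudProj V D * σ.permMatrix ℝ * cloudLift V D

noncomputable def derandSquareMatrix (B : Matrix D D ℝ) : Matrix V V ℝ :=
  cloudProj V D * σ.permMatrix ℝ * ((1 : Matrix V V ℝ) ⊗ₖ B) * σ.permMatrix ℝ * cloudLift V D

theorem derandSquareMatrix_transpose (hσ : σ⁻¹ = σ) {B : Matrix D D ℝ} (hB : Bᵀ = B) :
    (derandSquareMatrix σ B)ᵀ = derandSquareMatrix σ B := by
  simp only [derandSquareMatrix, cloudLift, Matrix.mul_smul, transpose_smul, transpose_mul,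
    transpose_transpose, transpose_permMatrix, hσ, ← kroneckerMap_transpose, transpose_one, hB,
    Matrix.mul_assoc]

theorem derandSquareMatrix_nonneg {B : Matrix D D ℝ} (hB : ∀ i j, 0 ≤ B i j) (u v : V) :
    0 ≤ derandSquareMatrix σ B u v := by
  have hkron (p q : V × D) : 0 ≤ ((1 : Matrix V V ℝ) ⊗ₖ B) p q := by
    refine mul_nonneg ?_ (hB _ _)
    rw [one_apply]
    split_ifs <;> norm_num
  have hperm := permMatrix_nonneg σ
  exact mul_apply_nonneg (mul_apply_nonneg (mul_apply_nonneg (mul_apply_nonneg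
    cloudProj_nonneg hperm) hkron) hperm) cloudLift_nonneg u v

theorem one_vecMul_derandSquareMatrix [Nonempty D] {B : Matrix D D ℝ}
    (hcol : ∀ j, ∑ i, B i j = 1) : 1 ᵥ* derandSquareMatrix σ B = 1 := by
  simp only [derandSquareMatrix, ← vecMul_vecMul, one_vecMul_cloudProj, one_vecMul_permMatrix,
    one_vecMul_one_kronecker hcol, one_vecMul_cloudLift]

theorem sum_derandSquareMatrix_apply [Nonempty D] (hσ : σ⁻¹ = σ) {B : Matrix D D ℝ}
    (hB : Bᵀ = B) (hcol : ∀ j, ∑ i, B i j = 1) (u : V) : ∑ v, derandSquareMatrix σ B u v = 1 := by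
  have hones := one_vecMul_derandSquareMatrix σ hcol
  rw [← derandSquareMatrix_transpose σ hσ hB, vecMul_transpose] at hones
  simpa [mulVec, dotProduct] using congrFun hones u

theorem one_vecMul_rotWalkMatrix [Nonempty D] : 1 ᵥ* rotWalkMatrix σ = 1 := by
  simp only [rotWalkMatrix, ← vecMul_vecMul, one_vecMul_cloudProj, one_vecMul_permMatrix,
    one_vecMul_cloudLift]

theorem derandSquareMatrix_eq_add (B : Matrix D D ℝ) (μ : ℝ) :
    derandSquareMatrix σ B = (1 - μ) • (rotWalkMatrix σ * rotWalkMatrix σ) +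
      cloudProj V D * (σ.permMatrix ℝ *
        (1 : Matrix V V ℝ) ⊗ₖ (B - ((1 - μ) / Fintype.card D) • of fun _ _ => 1) *
        σ.permMatrix ℝ) * cloudLift V D := by
  have hsplit : (1 : Matrix V V ℝ) ⊗ₖ B = (1 - μ) • (cloudLift V D * cloudProj V D) +
      (1 : Matrix V V ℝ) ⊗ₖ (B - ((1 - μ) / Fintype.card D) • of fun _ _ => 1) := by
    conv_lhs => rw [← add_sub_cancel (((1 - μ) / Fintype.card D) • of fun _ _ => (1 : ℝ)) B]
    rw [kronecker_add, kronecker_smul, cloudLift_mul_cloudProj, kronecker_smul, smul_smul,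
      div_eq_mul_inv]
  rw [derandSquareMatrix, hsplit]
  simp only [rotWalkMatrix, Matrix.mul_add, Matrix.add_mul, Matrix.mul_smul, Matrix.smul_mul,
    Matrix.mul_assoc]

theorem dotProduct_derandSquareMatrix_mulVec_le [Nonempty D] {B : Matrix D D ℝ}
    (hrow : ∀ i, ∑ j, B i j = 1) (hcol : ∀ j, ∑ i, B i j = 1) {lam μ : ℝ} (hμ0 : 0 ≤ μ)
    (hμ1 : μ ≤ 1)
    (hG : ∀ v : V → ℝ, ∑ i, v i = 0 →
      (rotWalkMatrix σ *ᵥ v) ⬝ᵥ (rotWalkMatrix σ *ᵥ v) ≤ lam ^ 2 * (v ⬝ᵥ v))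
    (hB : ∀ w : D → ℝ, ∑ i, w i = 0 → (B *ᵥ w) ⬝ᵥ (B *ᵥ w) ≤ μ ^ 2 * (w ⬝ᵥ w))
    (v : V → ℝ) (hv : ∑ i, v i = 0) :
    (derandSquareMatrix σ B *ᵥ v) ⬝ᵥ (derandSquareMatrix σ B *ᵥ v) ≤
      (1 - (1 - lam ^ 2) * (1 - μ)) ^ 2 * (v ⬝ᵥ v) := by
  set W := rotWalkMatrix σ
  set A := σ.permMatrix ℝ
  set E := B - ((1 - μ) / Fintype.card D) • of fun _ _ => (1 : ℝ)
  have hsquare : (((1 - μ) • (W * W)) *ᵥ v) ⬝ᵥ (((1 - μ) • (W * W)) *ᵥ v) ≤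
      ((1 - μ) * lam ^ 2) ^ 2 * (v ⬝ᵥ v) := by
    rw [smul_mulVec, smul_dotProduct_smul_self, mul_pow, mul_assoc]
    gcongr
    exact dotProduct_mul_self_mulVec_le (one_vecMul_rotWalkMatrix σ) hG v hv
  have hconj (x : V × D → ℝ) :
      ((A * (1 : Matrix V V ℝ) ⊗ₖ E * A) *ᵥ x) ⬝ᵥ ((A * (1 : Matrix V V ℝ) ⊗ₖ E * A) *ᵥ x) ≤
        μ ^ 2 * (x ⬝ᵥ x) := by
    rw [← mulVec_mulVec, ← mulVec_mulVec, dotProduct_permMatrix_mulVec,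
      ← dotProduct_permMatrix_mulVec σ x]
    exact dotProduct_one_kronecker_mulVec_le (dotProduct_sub_smul_allOnes_mulVec_le hrow hcol hB) _
  rw [derandSquareMatrix_eq_add σ B μ, add_mulVec]
  calc _ ≤ ((1 - μ) * lam ^ 2 + μ) ^ 2 * (v ⬝ᵥ v) :=
        dotProduct_self_add_le (mul_nonneg (sub_nonneg.2 hμ1) (sq_nonneg lam)) hμ0 hsquare
          (dotProduct_cloudProj_mul_mul_cloudLift_mulVec_le hconj v)
    _ = (1 - (1 - lam ^ 2) * (1 - μ)) ^ 2 * (v ⬝ᵥ v) := by ring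

end DerandomizedSquare

theorem derandomized_square_expansion_general {n d : ℕ} (hd : 0 < d)
    (Rot : Fin n × Fin d → Fin n × Fin d) (hRot : Function.Involutive Rot)
    (B : Matrix (Fin d) (Fin d) ℝ) (hBsym : Bᵀ = B)
    (hBnn : ∀ i j, 0 ≤ B i j) (hBrow : ∀ i, ∑ j, B i j = 1)
    (lam mu : ℝ) (hmu0 : 0 ≤ mu) (hmu1 : mu ≤ 1) :
    let Q : Matrix (Fin n × Fin d) (Fin n) ℝ := fun p v => if p.1 = v then (1 : ℝ) / d else 0
    let Pm : Matrix (Fin n) (Fin n × Fin d) ℝ := fun v p => if p.1 = v then 1 else 0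
    let At : Matrix (Fin n × Fin d) (Fin n × Fin d) ℝ := fun p q => if Rot p = q then 1 else 0
    let Bt : Matrix (Fin n × Fin d) (Fin n × Fin d) ℝ :=
      fun p q => if p.1 = q.1 then B p.2 q.2 else 0
    let MG : Matrix (Fin n) (Fin n) ℝ := Pm * At * Q
    let Mds : Matrix (Fin n) (Fin n) ℝ := Pm * At * Bt * At * Q
    -- λ(G) = λ and λ(H) = μ (as bounds on the operator norm off the all-ones vector)
    (∀ v : Fin n → ℝ, ∑ i, v i = 0 → (MG *ᵥ v) ⬝ᵥ (MG *ᵥ v) ≤ lam ^ 2 * (v ⬝ᵥ v)) →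
    (∀ w : Fin d → ℝ, ∑ i, w i = 0 → (B *ᵥ w) ⬝ᵥ (B *ᵥ w) ≤ mu ^ 2 * (w ⬝ᵥ w)) →
    (Mdsᵀ = Mds ∧ (∀ i j, 0 ≤ Mds i j) ∧ (∀ i, ∑ j, Mds i j = 1) ∧
      (∀ v : Fin n → ℝ, ∑ i, v i = 0 →
        (Mds *ᵥ v) ⬝ᵥ (Mds *ᵥ v) ≤ (1 - (1 - lam ^ 2) * (1 - mu)) ^ 2 * (v ⬝ᵥ v)) ∧
      1 - (1 - lam ^ 2) * (1 - mu) ≤ lam ^ 2 + mu) := by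
  intro Q Pm At Bt MG Mds hG hH
  have : Nonempty (Fin d) := ⟨⟨0, hd⟩⟩
  set σ := hRot.toPerm Rot
  have hcol (j : Fin d) : ∑ i, B i j = 1 := by
    have hrow := hBrow j
    rw [← hBsym] at hrow
    exact hrow
  have hA : At = σ.permMatrix ℝ := by
    ext p q
    simp [At, σ, PEquiv.toMatrix_apply]
  have hP : Pm = cloudProj (Fin n) (Fin d) := rfl
  have hQ : Q = cloudLift (Fin n) (Fin d) := by
    ext p v
    simp [Q, cloudLift, cloudProj]
  have hBt : Bt = (1 : Matrix (Fin n) (Fin n) ℝ) ⊗ₖ B := by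
    ext p q
    simp [Bt, one_apply]
  have hMG : MG = rotWalkMatrix σ := by
    simp only [MG, hP, hA, hQ, rotWalkMatrix]
  have hMds : Mds = derandSquareMatrix σ B := by
    simp only [Mds, hP, hA, hBt, hQ, derandSquareMatrix]
  rw [hMG] at hG
  rw [hMds]
  refine ⟨derandSquareMatrix_transpose σ hRot.toPerm_symm hBsym, derandSquareMatrix_nonneg σ hBnn,
    sum_derandSquareMatrix_apply σ hRot.toPerm_symm hBsym hcol,
    dotProduct_derandSquareMatrix_mulVec_le σ hBrow hcol hmu0 hmu1 hG hH, ?_⟩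
  nlinarith [mul_nonneg (sq_nonneg lam) hmu0]

/-- Derandomized square (Rozenman–Vadhan): if G is a d-regular undirected multigraph on
n vertices with λ(G) = λ, given by an involutive rotation map Rot, and H is a c-regular
graph on d vertices with symmetric doubly stochastic transition matrix B and λ(H) = μ,
then the derandomized square G ⓢ H, whose transition matrix is M̃ = P Ã B̃ Ã Q, is a
(d·c)-regular undirected multigraph (M̃ symmetric, nonnegative, doubly stochastic) with
λ(G ⓢ H) ≤ 1 − (1 − λ²)(1 − μ) ≤ λ² + μ. -/
theorem derandomized_square_expansion {n d : ℕ} (hn : 0 < n) (hd : 0 < d)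
    (Rot : Fin n × Fin d → Fin n × Fin d) (hRot : Function.Involutive Rot)
    (B : Matrix (Fin d) (Fin d) ℝ) (hBsym : Bᵀ = B)
    (hBnn : ∀ i j, 0 ≤ B i j) (hBrow : ∀ i, ∑ j, B i j = 1)
    (lam mu : ℝ) (hlam0 : 0 ≤ lam) (hlam1 : lam ≤ 1) (hmu0 : 0 ≤ mu) (hmu1 : mu ≤ 1) :
    let Q : Matrix (Fin n × Fin d) (Fin n) ℝ := fun p v => if p.1 = v then (1 : ℝ) / d else 0
    let Pm : Matrix (Fin n) (Fin n × Fin d) ℝ := fun v p => if p.1 = v then 1 else 0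
    let At : Matrix (Fin n × Fin d) (Fin n × Fin d) ℝ := fun p q => if Rot p = q then 1 else 0
    let Bt : Matrix (Fin n × Fin d) (Fin n × Fin d) ℝ :=
      fun p q => if p.1 = q.1 then B p.2 q.2 else 0
    let MG : Matrix (Fin n) (Fin n) ℝ := Pm * At * Q
    let Mds : Matrix (Fin n) (Fin n) ℝ := Pm * At * Bt * At * Q
    -- λ(G) = λ and λ(H) = μ (as bounds on the operator norm off the all-ones vector)
    (∀ v : Fin n → ℝ, ∑ i, v i = 0 → (MG *ᵥ v) ⬝ᵥ (MG *ᵥ v) ≤ lam ^ 2 * (v ⬝ᵥ v)) →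
    (∀ w : Fin d → ℝ, ∑ i, w i = 0 → (B *ᵥ w) ⬝ᵥ (B *ᵥ w) ≤ mu ^ 2 * (w ⬝ᵥ w)) →
    (Mdsᵀ = Mds ∧ (∀ i j, 0 ≤ Mds i j) ∧ (∀ i, ∑ j, Mds i j = 1) ∧
      (∀ v : Fin n → ℝ, ∑ i, v i = 0 →
        (Mds *ᵥ v) ⬝ᵥ (Mds *ᵥ v) ≤ (1 - (1 - lam ^ 2) * (1 - mu)) ^ 2 * (v ⬝ᵥ v)) ∧
      1 - (1 - lam ^ 2) * (1 - mu) ≤ lam ^ 2 + mu) :=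
  derandomized_square_expansion_general hd Rot hRot B hBsym hBnn hBrow lam mu hmu0 hmu1
end

section
/- Let G be a d-regular undirected aperiodic multigraph on n vertices and H a regular multigraph on d vertices with λ(H) ≤ α. Then L(G²) ≈_ε L(G ⓢ H) for ε = ln(1/(1−α)), where L denotes the normalized Laplacian I − M. -/
/-!
Put `C = P Ã`. Since `Q = d⁻¹ Pᵀ`, `Ã² = I`, `P Q = I` and `Q P = I ⊗ J`, both Laplacians are
compressions of block-diagonal ones: `I − M̃ = d⁻¹ C (I ⊗ (I − B)) Cᵀ` and
`I − M(G)² = d⁻¹ C (I ⊗ (I − J)) Cᵀ`. Compression and `I ⊗ ·` preserve the Loewner order, so it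
suffices that `(1 − α)(I − J) ⪯ I − B ⪯ (1 − α)⁻¹ (I − J)`. Both sides vanish on constants, and on
mean-zero `u` Cauchy–Schwarz with `‖B u‖ ≤ α ‖u‖` gives `|⟨u, B u⟩| ≤ α ‖u‖²`.
-/

open Matrix

open scoped Kronecker

namespace Matrix

variable {ι : Type*} [Fintype ι]

/-- The transition matrix `J` of the complete graph with self-loops. -/
noncomputable def avgMatrix (ι : Type*) [Fintype ι] : Matrix ι ι ℝ :=
  of fun _ _ => (Fintype.card ι : ℝ)⁻¹

theorem avgMatrix_transpose : (avgMatrix ι)ᵀ = avgMatrix ι := rfl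

theorem avgMatrix_mulVec (u : ι → ℝ) :
    avgMatrix ι *ᵥ u = fun _ => (Fintype.card ι : ℝ)⁻¹ * ∑ i, u i := by
  ext; simp [avgMatrix, mulVec, dotProduct, Finset.mul_sum]

theorem avgMatrix_mulVec_one : avgMatrix ι *ᵥ 1 = 1 := by
  ext i
  have : Nonempty ι := ⟨i⟩
  simp [avgMatrix_mulVec]

theorem posSemidef_of_dotProduct_mulVec_nonneg_of_sum_eq_zero {Y : Matrix ι ι ℝ}
    (hY : Yᵀ = Y) (hY1 : Y *ᵥ 1 = 0)
    (h : ∀ u : ι → ℝ, ∑ i, u i = 0 → 0 ≤ u ⬝ᵥ (Y *ᵥ u)) : Y.PosSemidef := by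
  refine .of_dotProduct_mulVec_nonneg (by rwa [IsHermitian, conjTranspose_eq_transpose_of_trivial])
    fun x => ?_
  set m := (Fintype.card ι : ℝ)⁻¹ * ∑ i, x i
  -- `Y` kills the constants on both sides, so the form is invariant under `x ↦ x - m • 1`
  have hx : x = (x - m • 1) + m • 1 := by abel
  have hshift : x ⬝ᵥ (Y *ᵥ x) = (x - m • 1) ⬝ᵥ (Y *ᵥ (x - m • 1)) := by
    have h1Y : (1 : ι → ℝ) ᵥ* Y = 0 := by rw [← hY, vecMul_transpose]; exact hY1
    conv_lhs => rw [hx]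
    simp only [mulVec_add, mulVec_smul, hY1, smul_zero, add_zero, add_dotProduct,
      smul_dotProduct, dotProduct_mulVec 1, h1Y, zero_dotProduct, smul_zero]
  rw [star_trivial, hshift]
  refine h _ ?_
  rcases isEmpty_or_nonempty ι with _ | _
  · simp
  · simp [Finset.sum_sub_distrib, m, Finset.card_univ]

section SpectralExpander

variable {B : Matrix ι ι ℝ} {α : ℝ}

theorem abs_dotProduct_mulVec_le_of_sum_eq_zero (hα0 : 0 ≤ α)
    (hB : ∀ w : ι → ℝ, ∑ i, w i = 0 → (B *ᵥ w) ⬝ᵥ (B *ᵥ w) ≤ α ^ 2 * (w ⬝ᵥ w))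
    {u : ι → ℝ} (hu : ∑ i, u i = 0) : |u ⬝ᵥ (B *ᵥ u)| ≤ α * (u ⬝ᵥ u) := by
  have hcs : (u ⬝ᵥ (B *ᵥ u)) ^ 2 ≤ (u ⬝ᵥ u) * ((B *ᵥ u) ⬝ᵥ (B *ᵥ u)) := by
    simpa only [dotProduct, sq] using Finset.sum_mul_sq_le_sq_mul_sq Finset.univ u (B *ᵥ u)
  have huu : 0 ≤ u ⬝ᵥ u := Finset.sum_nonneg fun i _ => mul_self_nonneg (u i)
  refine abs_le_of_sq_le_sq ?_ (mul_nonneg hα0 huu)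
  calc (u ⬝ᵥ (B *ᵥ u)) ^ 2 ≤ (u ⬝ᵥ u) * (α ^ 2 * (u ⬝ᵥ u)) :=
        hcs.trans (mul_le_mul_of_nonneg_left (hB u hu) huu)
    _ = (α * (u ⬝ᵥ u)) ^ 2 := by ring

theorem mulVec_one_of_sum_row_eq_one (hBrow : ∀ i, ∑ j, B i j = 1) : B *ᵥ 1 = 1 := by
  ext i; simpa [mulVec, dotProduct] using hBrow i

variable [DecidableEq ι]

theorem one_sub_avgMatrix_mulVec_of_sum_eq_zero {u : ι → ℝ} (hu : ∑ i, u i = 0) :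
    (1 - avgMatrix ι) *ᵥ u = u := by
  ext i; simp [sub_mulVec, avgMatrix_mulVec, hu]

variable (hBsym : Bᵀ = B) (hBrow : ∀ i, ∑ j, B i j = 1) (hα0 : 0 ≤ α)
  (hB : ∀ w : ι → ℝ, ∑ i, w i = 0 → (B *ᵥ w) ⬝ᵥ (B *ᵥ w) ≤ α ^ 2 * (w ⬝ᵥ w))
include hBsym hBrow hα0 hB

theorem posSemidef_one_sub_sub_smul_one_sub_avgMatrix :
    ((1 - B) - (1 - α) • (1 - avgMatrix ι)).PosSemidef := by
  refine posSemidef_of_dotProduct_mulVec_nonneg_of_sum_eq_zero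
    (by simp [hBsym, avgMatrix_transpose])
    (by simp [sub_mulVec, smul_mulVec, mulVec_one_of_sum_row_eq_one hBrow, avgMatrix_mulVec_one])
    fun u hu => ?_
  have hBu := (abs_le.mp (abs_dotProduct_mulVec_le_of_sum_eq_zero hα0 hB hu)).2
  simp only [sub_mulVec, smul_mulVec, one_sub_avgMatrix_mulVec_of_sum_eq_zero hu, one_mulVec,
    dotProduct_sub, dotProduct_smul, smul_eq_mul]
  linarith

theorem posSemidef_inv_smul_one_sub_avgMatrix_sub_one_sub (hα1 : α < 1) :
    ((1 - α)⁻¹ • (1 - avgMatrix ι) - (1 - B)).PosSemidef := by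
  refine posSemidef_of_dotProduct_mulVec_nonneg_of_sum_eq_zero
    (by simp [hBsym, avgMatrix_transpose])
    (by simp [sub_mulVec, smul_mulVec, mulVec_one_of_sum_row_eq_one hBrow, avgMatrix_mulVec_one])
    fun u hu => ?_
  have hBu := (abs_le.mp (abs_dotProduct_mulVec_le_of_sum_eq_zero hα0 hB hu)).1
  have huu : 0 ≤ u ⬝ᵥ u := Finset.sum_nonneg fun i _ => mul_self_nonneg (u i)
  have hc : 1 + α ≤ (1 - α)⁻¹ := by
    rw [← one_div, le_div_iff₀ (by linarith)]; nlinarith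
  simp only [sub_mulVec, smul_mulVec, one_sub_avgMatrix_mulVec_of_sum_eq_zero hu, one_mulVec,
    dotProduct_sub, dotProduct_smul, smul_eq_mul]
  nlinarith

end SpectralExpander

end Matrix

section DerandomizedSquare

variable {V : Type*} [DecidableEq V] {d : ℕ}

variable (V d) in
noncomputable def liftMatrix : Matrix (V × Fin d) V ℝ :=
  of fun p v => if p.1 = v then (1 : ℝ) / d else 0

variable (V d) in
def projMatrix : Matrix V (V × Fin d) ℝ := of fun v p => if p.1 = v then 1 else 0

def rotMatrix (Rot : V × Fin d → V × Fin d) : Matrix (V × Fin d) (V × Fin d) ℝ :=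
  of fun p q => if Rot p = q then 1 else 0

theorem rotMatrix_transpose {Rot : V × Fin d → V × Fin d} (hRot : Function.Involutive Rot) :
    (rotMatrix Rot)ᵀ = rotMatrix Rot := by
  ext p q
  exact if_congr (hRot.eq_iff.trans eq_comm) rfl rfl

theorem liftMatrix_eq_inv_smul_transpose :
    liftMatrix V d = (d : ℝ)⁻¹ • (projMatrix V d)ᵀ := by
  ext p v
  simp [liftMatrix, projMatrix]

variable [Fintype V]

theorem rotMatrix_mul_self {Rot : V × Fin d → V × Fin d} (hRot : Function.Involutive Rot) :
    rotMatrix Rot * rotMatrix Rot = 1 := by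
  ext p q
  simp only [rotMatrix, mul_apply, of_apply, ite_mul, one_mul, zero_mul, Finset.sum_ite_eq,
    Finset.mem_univ, if_true, hRot p, one_apply]

theorem projMatrix_mul_liftMatrix (hd : 0 < d) : projMatrix V d * liftMatrix V d = 1 := by
  ext v w
  have hd' : (d : ℝ) ≠ 0 := by positivity
  rcases eq_or_ne v w with rfl | hvw
  · simp [projMatrix, liftMatrix, mul_apply, Fintype.sum_prod_type, hd']
  · simp [projMatrix, liftMatrix, mul_apply, Fintype.sum_prod_type, hvw, hvw.symm]

theorem liftMatrix_mul_projMatrix :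
    liftMatrix V d * projMatrix V d = 1 ⊗ₖ avgMatrix (Fin d) := by
  ext p q
  simp [projMatrix, liftMatrix, avgMatrix, mul_apply, one_apply]

/-- `X ↦ P Ã (I ⊗ X) Ã Q`: for `X` the transition matrix of `H` this is that of `G ⓢ H`, and for
`X = J` it is that of `G²` (`derandSq_avgMatrix`). -/
noncomputable def derandSq (Rot : V × Fin d → V × Fin d) :
    Matrix (Fin d) (Fin d) ℝ →ₗ[ℝ] Matrix V V ℝ where
  toFun X :=
    projMatrix V d * rotMatrix Rot * ((1 : Matrix V V ℝ) ⊗ₖ X) * rotMatrix Rot * liftMatrix V d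
  map_add' X Y := by simp only [kronecker_add, Matrix.mul_add, Matrix.add_mul]
  map_smul' c X := by
    simp only [kronecker_smul, Matrix.mul_smul, Matrix.smul_mul, RingHom.id_apply]

theorem derandSq_apply (Rot : V × Fin d → V × Fin d) (X : Matrix (Fin d) (Fin d) ℝ) :
    derandSq Rot X =
      projMatrix V d * rotMatrix Rot * ((1 : Matrix V V ℝ) ⊗ₖ X) * rotMatrix Rot * liftMatrix V d :=
  rfl

theorem derandSq_one {Rot : V × Fin d → V × Fin d} (hRot : Function.Involutive Rot)
    (hd : 0 < d) : derandSq Rot 1 = 1 := by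
  rw [derandSq_apply, one_kronecker_one, Matrix.mul_one, Matrix.mul_assoc (projMatrix V d),
    rotMatrix_mul_self hRot, Matrix.mul_one, projMatrix_mul_liftMatrix hd]

theorem derandSq_avgMatrix (Rot : V × Fin d → V × Fin d) :
    derandSq Rot (avgMatrix (Fin d)) =
      projMatrix V d * rotMatrix Rot * liftMatrix V d *
        (projMatrix V d * rotMatrix Rot * liftMatrix V d) := by
  simp only [derandSq_apply, ← liftMatrix_mul_projMatrix, Matrix.mul_assoc]

theorem posSemidef_derandSq {Rot : V × Fin d → V × Fin d} (hRot : Function.Involutive Rot)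
    {X : Matrix (Fin d) (Fin d) ℝ} (hX : X.PosSemidef) : (derandSq Rot X).PosSemidef := by
  have hconj : derandSq Rot X = (d : ℝ)⁻¹ • (projMatrix V d * rotMatrix Rot *
      ((1 : Matrix V V ℝ) ⊗ₖ X) * (projMatrix V d * rotMatrix Rot)ᴴ) := by
    rw [derandSq_apply, liftMatrix_eq_inv_smul_transpose, conjTranspose_eq_transpose_of_trivial,
      transpose_mul, rotMatrix_transpose hRot, Matrix.mul_smul, Matrix.mul_assoc _ (rotMatrix Rot)]
  rw [hconj]
  exact ((PosSemidef.one.kronecker hX).mul_mul_conjTranspose_same _).smul (by positivity)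

end DerandomizedSquare

theorem derandomized_square_spectral_approx_general {n d : ℕ} (hd : 0 < d)
    (Rot : Fin n × Fin d → Fin n × Fin d) (hRot : Function.Involutive Rot)
    (B : Matrix (Fin d) (Fin d) ℝ) (hBsym : Bᵀ = B)
    (hBrow : ∀ i, ∑ j, B i j = 1)
    (α ε : ℝ) (hα0 : 0 ≤ α) (hα1 : α < 1) (hε : ε = Real.log (1 / (1 - α)))
    (hB : ∀ w : Fin d → ℝ, ∑ i, w i = 0 → (B *ᵥ w) ⬝ᵥ (B *ᵥ w) ≤ α ^ 2 * (w ⬝ᵥ w)) :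
    let Q : Matrix (Fin n × Fin d) (Fin n) ℝ := fun p v => if p.1 = v then (1 : ℝ) / d else 0
    let Pm : Matrix (Fin n) (Fin n × Fin d) ℝ := fun v p => if p.1 = v then 1 else 0
    let At : Matrix (Fin n × Fin d) (Fin n × Fin d) ℝ := fun p q => if Rot p = q then 1 else 0
    let Bt : Matrix (Fin n × Fin d) (Fin n × Fin d) ℝ :=
      fun p q => if p.1 = q.1 then B p.2 q.2 else 0
    let MG : Matrix (Fin n) (Fin n) ℝ := Pm * At * Q
    let Mds : Matrix (Fin n) (Fin n) ℝ := Pm * At * Bt * At * Q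
    -- aperiodicity of G: −1 is not an eigenvalue of its transition matrix
    ((1 : Matrix (Fin n) (Fin n) ℝ) + MG).PosDef →
    (((1 - Mds) - Real.exp (-ε) • ((1 : Matrix (Fin n) (Fin n) ℝ) - MG * MG)).PosSemidef ∧
      (Real.exp ε • ((1 : Matrix (Fin n) (Fin n) ℝ) - MG * MG) - (1 - Mds)).PosSemidef) := by
  intro Q Pm At Bt MG Mds _
  have hBt : Bt = 1 ⊗ₖ B := by ext p q; simp [Bt, one_apply]
  have hMds : Mds = derandSq Rot B := by rw [derandSq_apply, ← hBt]; rfl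
  have hMG2 : MG * MG = derandSq Rot (avgMatrix (Fin d)) := (derandSq_avgMatrix Rot).symm
  have hexp_neg : Real.exp (-ε) = 1 - α := by
    rw [hε, one_div, Real.log_inv, neg_neg, Real.exp_log (by linarith)]
  have hexp : Real.exp ε = (1 - α)⁻¹ := by
    rw [hε, one_div, Real.exp_log (inv_pos.mpr (by linarith))]
  rw [hexp_neg, hexp, hMds, hMG2]
  constructor
  · simpa only [map_sub, map_smul, derandSq_one hRot hd] using
      posSemidef_derandSq hRot (posSemidef_one_sub_sub_smul_one_sub_avgMatrix hBsym hBrow hα0 hB)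
  · simpa only [map_sub, map_smul, derandSq_one hRot hd] using
      posSemidef_derandSq hRot
        (posSemidef_inv_smul_one_sub_avgMatrix_sub_one_sub hBsym hBrow hα0 hB hα1)

/-- The derandomized square spectrally approximates the true square: for a d-regular
undirected aperiodic multigraph G on n vertices (given by an involutive rotation map)
and a regular (1/2-lazy) multigraph H on d vertices with transition matrix B and
λ(H) ≤ α, we have L(G²) ≈_ε L(G ⓢ H) for ε = ln(1/(1−α)), where the transition matrix
of G ⓢ H is M̃ = P Ã B̃ Ã Q and that of G² is (P Ã Q)². -/
theorem derandomized_square_spectral_approx {n d : ℕ} (hn : 0 < n) (hd : 0 < d)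
    (Rot : Fin n × Fin d → Fin n × Fin d) (hRot : Function.Involutive Rot)
    (B : Matrix (Fin d) (Fin d) ℝ) (hBsym : Bᵀ = B)
    (hBnn : ∀ i j, 0 ≤ B i j) (hBrow : ∀ i, ∑ j, B i j = 1)
    (hBlazy : ∀ i, (1 : ℝ) / 2 ≤ B i i)
    (α ε : ℝ) (hα0 : 0 ≤ α) (hα1 : α < 1) (hε : ε = Real.log (1 / (1 - α)))
    (hB : ∀ w : Fin d → ℝ, ∑ i, w i = 0 → (B *ᵥ w) ⬝ᵥ (B *ᵥ w) ≤ α ^ 2 * (w ⬝ᵥ w)) :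
    let Q : Matrix (Fin n × Fin d) (Fin n) ℝ := fun p v => if p.1 = v then (1 : ℝ) / d else 0
    let Pm : Matrix (Fin n) (Fin n × Fin d) ℝ := fun v p => if p.1 = v then 1 else 0
    let At : Matrix (Fin n × Fin d) (Fin n × Fin d) ℝ := fun p q => if Rot p = q then 1 else 0
    let Bt : Matrix (Fin n × Fin d) (Fin n × Fin d) ℝ :=
      fun p q => if p.1 = q.1 then B p.2 q.2 else 0
    let MG : Matrix (Fin n) (Fin n) ℝ := Pm * At * Q
    let Mds : Matrix (Fin n) (Fin n) ℝ := Pm * At * Bt * At * Q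
    -- aperiodicity of G: −1 is not an eigenvalue of its transition matrix
    ((1 : Matrix (Fin n) (Fin n) ℝ) + MG).PosDef →
    (((1 - Mds) - Real.exp (-ε) • ((1 : Matrix (Fin n) (Fin n) ℝ) - MG * MG)).PosSemidef ∧
      (Real.exp ε • ((1 : Matrix (Fin n) (Fin n) ℝ) - MG * MG) - (1 - Mds)).PosSemidef) :=
  derandomized_square_spectral_approx_general hd Rot hRot B hBsym hBrow α ε hα0 hα1 hε hB
end

section
/- Let L be a symmetric PSD n×n matrix with kernel spanned by the all-ones vector (a normalized Laplacian of a connected regular multigraph), L̃⁺ a symmetric matrix with L̃⁺ ≈_ε L⁺, ε ≤ ln 2, and b ∈ im(L). Then x̃ = L̃⁺b satisfies ‖x* − x̃‖_L² ≤ 2ε·‖x*‖_L², where x* = L⁺b and ‖v‖_L = √(vᵀLv). -/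
/-!
Write `b = L x`, `S = √L` and `y = S x`. Then `‖x* - x̃‖_L² = ‖C y‖²` and `‖x*‖_L² = ‖y‖²` for
the symmetric matrix `C = P - T`, where `P = S L⁺ S` and `T = S L̃⁺ S`. Since `L⁺ L L⁺ = L⁺`, `P` is
an orthogonal projection, and conjugating `L̃⁺ ≈_ε L⁺` by `S` gives `e^{-ε} T ⪯ P ⪯ e^ε T`, hence
`|zᵀ C z| ≤ (e^ε - 1) ‖z‖²`. For a symmetric matrix this bounds the operator norm, so
`‖C y‖² ≤ (e^ε - 1)² ‖y‖²`, and `(e^ε - 1)² ≤ 2ε` on `[0, ln 2]`.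
-/

open Matrix
open scoped InnerProductSpace MatrixOrder

theorem ContinuousLinearMap.norm_le_of_abs_re_inner_self_le {𝕜 E : Type*} [RCLike 𝕜]
    [NormedAddCommGroup E] [InnerProductSpace 𝕜 E] {T : E →L[𝕜] E}
    (hT : (T : E →ₗ[𝕜] E).IsSymmetric) {c : ℝ} (hc : 0 ≤ c)
    (h : ∀ x, |RCLike.re ⟪T x, x⟫_𝕜| ≤ c * ‖x‖ ^ 2) : ‖T‖ ≤ c := by
  rw [T.norm_eq_iSup_rayleighQuotient hT]
  refine ciSup_le fun x => ?_
  rcases eq_or_ne x 0 with rfl | hx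
  · simpa using hc
  · rw [rayleighQuotient, reApplyInnerSelf_apply, abs_div, abs_sq, div_le_iff₀ (by positivity)]
    exact h x

theorem IsSelfAdjoint.isStarProjection_mul_mul {R : Type*} [Semigroup R] [StarMul R] {s a : R}
    (hs : IsSelfAdjoint s) (ha : IsSelfAdjoint a) (h : a * (s * s) * a = a) :
    IsStarProjection (s * a * s) where
  isIdempotentElem :=
    calc s * a * s * (s * a * s) = s * (a * (s * s) * a) * s := by simp only [mul_assoc]
      _ = s * a * s := by rw [h]
  isSelfAdjoint := by
    rw [IsSelfAdjoint, star_mul, star_mul, hs.star_eq, ha.star_eq, mul_assoc]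

theorem Real.exp_sub_one_sq_le {ε : ℝ} (hε0 : 0 ≤ ε) (hε : ε ≤ Real.log 2) :
    (Real.exp ε - 1) ^ 2 ≤ 2 * ε := by
  have hle_two : Real.exp ε ≤ 2 :=
    calc Real.exp ε ≤ Real.exp (Real.log 2) := Real.exp_le_exp.2 hε
      _ = 2 := Real.exp_log two_pos
  have hε1 : ε ≤ 1 := hε.trans (Real.log_two_lt_d9.le.trans (by norm_num))
  have hexp := Real.exp_le_two_add_div_two_sub hε0 (by linarith)
  have hlin : Real.exp ε - 1 ≤ 2 * ε := by
    rw [le_div_iff₀ (by linarith)] at hexp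
    nlinarith
  nlinarith [Real.add_one_le_exp ε]

namespace Matrix

variable {ι : Type*} [Fintype ι]

theorem IsHermitian.mulVec_dotProduct {A : Matrix ι ι ℝ} (hA : A.IsHermitian) (u v : ι → ℝ) :
    A *ᵥ u ⬝ᵥ v = u ⬝ᵥ A *ᵥ v := by
  rw [dotProduct_mulVec, ← mulVec_transpose, ← conjTranspose_eq_transpose_of_trivial, hA.eq,
    dotProduct_comm]

theorem IsHermitian.dotProduct_mul_self_mulVec {S : Matrix ι ι ℝ} (hS : S.IsHermitian)
    (v : ι → ℝ) : v ⬝ᵥ (S * S) *ᵥ v = S *ᵥ v ⬝ᵥ S *ᵥ v := by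
  rw [← mulVec_mulVec, hS.mulVec_dotProduct]

theorem IsHermitian.dotProduct_mulVec_of_mul_mul_eq_self {L G : Matrix ι ι ℝ} (hL : L.IsHermitian)
    (hG : L * G * L = L) (x : ι → ℝ) :
    G *ᵥ (L *ᵥ x) ⬝ᵥ L *ᵥ (G *ᵥ (L *ᵥ x)) = x ⬝ᵥ L *ᵥ x := by
  have hLGL : L *ᵥ (G *ᵥ (L *ᵥ x)) = L *ᵥ x := by rw [mulVec_mulVec, mulVec_mulVec, hG]
  rw [hLGL, ← hL.mulVec_dotProduct _ x, hLGL, hL.mulVec_dotProduct]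

variable [DecidableEq ι]

theorem IsStarProjection.dotProduct_mulVec_le {P : Matrix ι ι ℝ} (hP : IsStarProjection P)
    (z : ι → ℝ) : z ⬝ᵥ P *ᵥ z ≤ z ⬝ᵥ z := by
  simpa [sub_mulVec, dotProduct_sub] using (le_iff.1 hP.le_one).dotProduct_mulVec_nonneg z

theorem IsStarProjection.abs_dotProduct_sub_mulVec_le {P T : Matrix ι ι ℝ}
    (hP : IsStarProjection P) {u : ℝ} (hu : 1 ≤ u) (hlow : (P - u⁻¹ • T).PosSemidef)
    (hup : (u • T - P).PosSemidef) (z : ι → ℝ) :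
    |z ⬝ᵥ (P - T) *ᵥ z| ≤ (u - 1) * (z ⬝ᵥ z) := by
  have hu0 : 0 < u := by linarith
  have hT_le : z ⬝ᵥ T *ᵥ z ≤ u * (z ⬝ᵥ P *ᵥ z) := by
    rw [← inv_mul_le_iff₀ hu0]
    simpa [sub_mulVec, dotProduct_sub, smul_mulVec] using hlow.dotProduct_mulVec_nonneg z
  have hT_ge : u⁻¹ * (z ⬝ᵥ P *ᵥ z) ≤ z ⬝ᵥ T *ᵥ z := by
    rw [inv_mul_le_iff₀ hu0]
    simpa [sub_mulVec, dotProduct_sub, smul_mulVec] using hup.dotProduct_mulVec_nonneg z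
  have hP_nonneg : 0 ≤ z ⬝ᵥ P *ᵥ z := by
    simpa using (nonneg_iff_posSemidef.1 hP.nonneg).dotProduct_mulVec_nonneg z
  have hP_le := hP.dotProduct_mulVec_le z
  have hu_inv : 1 - u⁻¹ ≤ u - 1 := by
    have := mul_inv_cancel₀ hu0.ne'
    nlinarith [inv_pos.2 hu0]
  rw [sub_mulVec, dotProduct_sub, abs_le]
  constructor
  · nlinarith
  · nlinarith [mul_le_mul_of_nonneg_right hu_inv hP_nonneg]

theorem IsHermitian.mulVec_dotProduct_mulVec_le {C : Matrix ι ι ℝ} (hC : C.IsHermitian) {c : ℝ}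
    (hc : 0 ≤ c) (h : ∀ z, |z ⬝ᵥ C *ᵥ z| ≤ c * (z ⬝ᵥ z)) (y : ι → ℝ) :
    C *ᵥ y ⬝ᵥ C *ᵥ y ≤ c ^ 2 * (y ⬝ᵥ y) := by
  have norm_sq (x : EuclideanSpace ℝ ι) : ‖x‖ ^ 2 = x.ofLp ⬝ᵥ x.ofLp := by
    rw [← real_inner_self_eq_norm_sq, EuclideanSpace.inner_eq_star_dotProduct, star_trivial]
  have hnorm : ‖toEuclideanCLM (𝕜 := ℝ) C‖ ≤ c := by
    refine ContinuousLinearMap.norm_le_of_abs_re_inner_self_le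
      (isSymmetric_toEuclideanLin_iff.2 hC) hc fun x => ?_
    rw [RCLike.re_to_real, real_inner_comm, inner_toEuclideanCLM, norm_sq]
    exact h x.ofLp
  have hy := (toEuclideanCLM (𝕜 := ℝ) C).le_of_opNorm_le hnorm (WithLp.toLp 2 y)
  rw [toEuclideanCLM_toLp] at hy
  have := pow_le_pow_left₀ (norm_nonneg _) hy 2
  rwa [mul_pow, norm_sq, norm_sq] at this

end Matrix

theorem approx_pseudoinverse_solution_general {n : ℕ} (L Lp Lt : Matrix (Fin n) (Fin n) ℝ) (ε : ℝ)
    (hL : L.PosSemidef)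
    -- Lp is the Moore–Penrose pseudoinverse of L
    (hp1 : L * Lp * L = L) (hp2 : Lp * L * Lp = Lp)
    -- L̃⁺ is symmetric PSD with the same kernel as L
    (hLt : Lt.PosSemidef)
    (hε0 : 0 ≤ ε) (hεle : ε ≤ Real.log 2)
    -- L̃⁺ ≈_ε L⁺
    (happ1 : (Lp - Real.exp (-ε) • Lt).PosSemidef)
    (happ2 : (Real.exp ε • Lt - Lp).PosSemidef)
    (b : Fin n → ℝ) (hb : ∃ x : Fin n → ℝ, L *ᵥ x = b) :
    (Lp *ᵥ b - Lt *ᵥ b) ⬝ᵥ (L *ᵥ (Lp *ᵥ b - Lt *ᵥ b)) ≤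
      2 * ε * ((Lp *ᵥ b) ⬝ᵥ (L *ᵥ (Lp *ᵥ b))) := by
  obtain ⟨x, rfl⟩ := hb
  set S := CFC.sqrt L
  have hS : S.IsHermitian := (CFC.sqrt_nonneg L).posSemidef.isHermitian
  have hSS : S * S = L := CFC.sqrt_mul_sqrt_self L hL.nonneg
  have hLp : Lp.IsHermitian := by
    simpa using happ1.isHermitian.add
      (IsHermitian.smul hLt.isHermitian (IsSelfAdjoint.all (Real.exp (-ε))))
  have hP : IsStarProjection (S * Lp * S) :=
    IsSelfAdjoint.isStarProjection_mul_mul hS hLp (by rw [hSS, hp2])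
  have hconj {A : Matrix (Fin n) (Fin n) ℝ} (hA : A.PosSemidef) : (S * A * S).PosSemidef := by
    simpa only [hS.eq] using hA.conjTranspose_mul_mul_same S
  have hform := hP.abs_dotProduct_sub_mulVec_le (T := S * Lt * S) (Real.one_le_exp hε0)
    (by simpa [Real.exp_neg, Matrix.mul_sub, Matrix.sub_mul] using hconj happ1)
    (by simpa [Matrix.mul_sub, Matrix.sub_mul] using hconj happ2)
  have hC : (S * Lp * S - S * Lt * S).IsHermitian :=
    IsHermitian.sub hP.isSelfAdjoint (hconj hLt).isHermitian
  have hSd : S *ᵥ ((Lp - Lt) *ᵥ ((S * S) *ᵥ x)) = (S * Lp * S - S * Lt * S) *ᵥ (S *ᵥ x) := by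
    simp only [mulVec_mulVec, Matrix.mul_sub, Matrix.sub_mul, Matrix.mul_assoc]
  rw [hL.isHermitian.dotProduct_mulVec_of_mul_mul_eq_self hp1, ← sub_mulVec, ← hSS,
    hS.dotProduct_mul_self_mulVec, hS.dotProduct_mul_self_mulVec, hSd]
  calc _ ≤ (Real.exp ε - 1) ^ 2 * (S *ᵥ x ⬝ᵥ S *ᵥ x) :=
        hC.mulVec_dotProduct_mulVec_le (sub_nonneg.2 (Real.one_le_exp hε0)) hform (S *ᵥ x)
    _ ≤ 2 * ε * (S *ᵥ x ⬝ᵥ S *ᵥ x) :=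
        mul_le_mul_of_nonneg_right (Real.exp_sub_one_sq_le hε0 hεle) (dotProduct_self_star_nonneg _)

/-- An ε-approximate pseudoinverse yields a √(2ε)-approximate solution: if
L̃⁺ ≈_ε L⁺ with ε ≤ ln 2 and b ∈ im(L), then x̃ = L̃⁺b satisfies
‖x* − x̃‖_L² ≤ 2ε·‖x*‖_L², where x* = L⁺b and ‖v‖_L² = vᵀLv. -/
theorem approx_pseudoinverse_solution {n : ℕ} (L Lp Lt : Matrix (Fin n) (Fin n) ℝ) (ε : ℝ)
    (hL : L.PosSemidef)
    (hker : ∀ v : Fin n → ℝ, L *ᵥ v = 0 ↔ ∃ c : ℝ, v = fun _ => c)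
    -- Lp is the Moore–Penrose pseudoinverse of L
    (hp1 : L * Lp * L = L) (hp2 : Lp * L * Lp = Lp)
    (hp3 : (Lp * L)ᵀ = Lp * L) (hp4 : (L * Lp)ᵀ = L * Lp)
    -- L̃⁺ is symmetric PSD with the same kernel as L
    (hLt : Lt.PosSemidef) (hkert : ∀ v : Fin n → ℝ, Lt *ᵥ v = 0 ↔ L *ᵥ v = 0)
    (hε0 : 0 ≤ ε) (hεle : ε ≤ Real.log 2)
    -- L̃⁺ ≈_ε L⁺
    (happ1 : (Lp - Real.exp (-ε) • Lt).PosSemidef)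
    (happ2 : (Real.exp ε • Lt - Lp).PosSemidef)
    (b : Fin n → ℝ) (hb : ∃ x : Fin n → ℝ, L *ᵥ x = b) :
    (Lp *ᵥ b - Lt *ᵥ b) ⬝ᵥ (L *ᵥ (Lp *ᵥ b - Lt *ᵥ b)) ≤
      2 * ε * ((Lp *ᵥ b) ⬝ᵥ (L *ᵥ (Lp *ᵥ b))) :=
  approx_pseudoinverse_solution_general L Lp Lt ε hL hp1 hp2 hLt hε0 hεle happ1 happ2 b hb
end

section
/- If L̃⁺ ≈_α L⁺ with α < 1/2, where L is the normalized Laplacian of a connected regular aperiodic multigraph, then L_k = e^{−α}·Σ_{i=0}^{k} L̃⁺·(I − e^{−α}·L·L̃⁺)^i satisfies L_k ≈_{O((2α)^k)} L⁺. -/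
open Matrix

namespace BoostAux

variable {n : ℕ}

lemma psd_symm {A : Matrix (Fin n) (Fin n) ℝ} (hA : A.PosSemidef) : Aᵀ = A := by
  have := hA.1
  rwa [Matrix.IsHermitian, conjTranspose_eq_transpose_of_trivial] at this

lemma psd_mk {A : Matrix (Fin n) (Fin n) ℝ} (h1 : Aᵀ = A)
    (h2 : ∀ x : Fin n → ℝ, 0 ≤ x ⬝ᵥ A *ᵥ x) : A.PosSemidef := by
  refine PosSemidef.of_dotProduct_mulVec_nonneg ?_ ?_
  · rwa [Matrix.IsHermitian, conjTranspose_eq_transpose_of_trivial]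
  · intro x
    simpa using h2 x

lemma psd_quad {A : Matrix (Fin n) (Fin n) ℝ} (hA : A.PosSemidef) (x : Fin n → ℝ) :
    0 ≤ x ⬝ᵥ A *ᵥ x := by simpa using hA.dotProduct_mulVec_nonneg x

lemma psd_smul {c : ℝ} (hc : 0 ≤ c) {A : Matrix (Fin n) (Fin n) ℝ} (hA : A.PosSemidef) :
    (c • A).PosSemidef := by
  refine psd_mk (by rw [transpose_smul, psd_symm hA]) (fun x => ?_)
  rw [smul_mulVec, dotProduct_smul, smul_eq_mul]
  exact mul_nonneg hc (psd_quad hA x)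

lemma psd_conj {A : Matrix (Fin n) (Fin n) ℝ} (hA : A.PosSemidef)
    (B : Matrix (Fin n) (Fin n) ℝ) : (Bᵀ * A * B).PosSemidef := by
  have := hA.conjTranspose_mul_mul_same B
  rwa [conjTranspose_eq_transpose_of_trivial] at this

lemma dot_symm {A : Matrix (Fin n) (Fin n) ℝ} (h : Aᵀ = A) (x y : Fin n → ℝ) :
    x ⬝ᵥ A *ᵥ y = (A *ᵥ x) ⬝ᵥ y := by
  rw [dotProduct_mulVec, ← mulVec_transpose, h]

/-- Cauchy–Schwarz for a PSD bilinear form. -/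
lemma psd_cs {A : Matrix (Fin n) (Fin n) ℝ} (hA : A.PosSemidef) (x y : Fin n → ℝ) :
    (x ⬝ᵥ A *ᵥ y) ^ 2 ≤ (x ⬝ᵥ A *ᵥ x) * (y ⬝ᵥ A *ᵥ y) := by
  have hsym := psd_symm hA
  have key : ∀ t : ℝ, 0 ≤ (y ⬝ᵥ A *ᵥ y) * (t * t) + (2 * (x ⬝ᵥ A *ᵥ y)) * t
      + (x ⬝ᵥ A *ᵥ x) := by
    intro t
    have h := psd_quad hA (x + t • y)
    have hyx : y ⬝ᵥ A *ᵥ x = x ⬝ᵥ A *ᵥ y := by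
      rw [dot_symm hsym x y, dotProduct_comm]
    simp only [mulVec_add, mulVec_smul, dotProduct_add, add_dotProduct, dotProduct_smul,
      smul_dotProduct, hyx, smul_eq_mul, Pi.smul_apply] at h
    nlinarith [h]
  have hd := discrim_le_zero key
  rw [discrim] at hd
  nlinarith [hd]

/-- Key Cauchy–Schwarz squaring step: if `0 ⪯ B ⪯ c·Lp` then `B L B ⪯ c²·Lp`,
provided `L Lp L = L` and everything is PSD. -/
lemma cs_step {L Lp B : Matrix (Fin n) (Fin n) ℝ} (hL : L.PosSemidef) (hLp : Lp.PosSemidef)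
    (hLpL : L * Lp * L = L) {c : ℝ}
    (hB : B.PosSemidef) (hBc : (c • Lp - B).PosSemidef) :
    ((c ^ 2) • Lp - B * L * B).PosSemidef := by
  have hLs := psd_symm hL
  have hLps := psd_symm hLp
  have hBs := psd_symm hB
  refine psd_mk ?_ ?_
  · rw [transpose_sub, transpose_smul, hLps, transpose_mul, transpose_mul, hLs, hBs,
      mul_assoc]
  · intro x
    set u : Fin n → ℝ := B *ᵥ x with hu
    set y : Fin n → ℝ := L *ᵥ u with hy
    set s : ℝ := u ⬝ᵥ L *ᵥ u with hs
    have hs0 : 0 ≤ s := psd_quad hL u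
    have hxBy : x ⬝ᵥ B *ᵥ y = s := by
      rw [dot_symm hBs x y, hs, hu, hy, dotProduct_comm]
    have hq : ∀ z : Fin n → ℝ, z ⬝ᵥ B *ᵥ z ≤ c * (z ⬝ᵥ Lp *ᵥ z) := by
      intro z
      have h := psd_quad hBc z
      rw [sub_mulVec, dotProduct_sub, smul_mulVec, dotProduct_smul, smul_eq_mul] at h
      linarith
    have hyy : y ⬝ᵥ Lp *ᵥ y = s := by
      rw [hy, ← dot_symm hLs, mulVec_mulVec, mulVec_mulVec, hLpL]
    have hcs := psd_cs hB x y
    rw [hxBy] at hcs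
    have h2 := hq y
    rw [hyy] at h2
    have h4 := hq x
    have hx0 : 0 ≤ x ⬝ᵥ Lp *ᵥ x := psd_quad hLp x
    have hgoal : x ⬝ᵥ (B * L * B) *ᵥ x = s := by
      rw [← mulVec_mulVec, ← mulVec_mulVec, ← hu, ← hy, hxBy]
    rw [sub_mulVec, dotProduct_sub, smul_mulVec, dotProduct_smul, smul_eq_mul, hgoal]
    have hBx0 : 0 ≤ x ⬝ᵥ B *ᵥ x := psd_quad hB x
    have hBy0 : 0 ≤ y ⬝ᵥ B *ᵥ y := psd_quad hB y
    have hcx : 0 ≤ c * (x ⬝ᵥ Lp *ᵥ x) := le_trans hBx0 h4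
    rcases eq_or_lt_of_le hs0 with hse | hsp
    · have : 0 ≤ c ^ 2 * (x ⬝ᵥ Lp *ᵥ x) := by positivity
      linarith
    · have hprod : (x ⬝ᵥ B *ᵥ x) * (y ⬝ᵥ B *ᵥ y) ≤ (c * (x ⬝ᵥ Lp *ᵥ x)) * (c * s) :=
        mul_le_mul h4 h2 hBy0 hcx
      have hfin : s * s ≤ (c ^ 2 * (x ⬝ᵥ Lp *ᵥ x)) * s := by nlinarith [hcs, hprod]
      have := le_of_mul_le_mul_right hfin hsp
      linarith

/-- Uniqueness of the Moore–Penrose pseudoinverse (real, via transposes). -/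
lemma mp_unique {A X Y : Matrix (Fin n) (Fin n) ℝ}
    (hx1 : A * X * A = A) (hx2 : X * A * X = X)
    (hx3 : (X * A)ᵀ = X * A) (hx4 : (A * X)ᵀ = A * X)
    (hy1 : A * Y * A = A) (hy3 : (Y * A)ᵀ = Y * A) (hy4 : (A * Y)ᵀ = A * Y)
    (hy2 : Y * A * Y = Y) : X = Y := by
  have hAX : A * X = A * Y := by
    calc A * X = (A * X)ᵀ := hx4.symm
      _ = ((A * Y * A) * X)ᵀ := by rw [hy1]
      _ = ((A * Y) * (A * X))ᵀ := by rw [mul_assoc]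
      _ = (A * X)ᵀ * (A * Y)ᵀ := transpose_mul _ _
      _ = (A * X) * (A * Y) := by rw [hx4, hy4]
      _ = (A * X * A) * Y := by simp only [mul_assoc]
      _ = A * Y := by rw [hx1]
  have hXA : X * A = Y * A := by
    calc X * A = (X * A)ᵀ := hx3.symm
      _ = (X * (A * Y * A))ᵀ := by rw [hy1]
      _ = ((X * A) * (Y * A))ᵀ := by simp only [mul_assoc]
      _ = (Y * A)ᵀ * (X * A)ᵀ := transpose_mul _ _
      _ = (Y * A) * (X * A) := by rw [hx3, hy3]
      _ = Y * (A * X * A) := by simp only [mul_assoc]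
      _ = Y * A := by rw [hx1]
  calc X = X * A * X := hx2.symm
    _ = X * (A * Y) := by rw [mul_assoc, hAX]
    _ = (X * A) * Y := by rw [mul_assoc]
    _ = (Y * A) * Y := by rw [hXA]
    _ = Y := hy2

/-- The scalar inequality: for `0 < a < 1` and `k ≥ 1`,
`(1 - e^{-a})^{k+1} ≤ 1 - e^{-3a^k}`. -/
lemma scalar_ineq {a : ℝ} (h0 : 0 < a) (h1 : a < 1) {k : ℕ} (hk : 1 ≤ k) :
    (1 - Real.exp (-a)) ^ (k + 1) ≤ 1 - Real.exp (-(3 * a ^ k)) := by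
  have hea : Real.exp (-a) ≤ 1 := Real.exp_le_one_iff.mpr (by linarith)
  have h1a : 0 ≤ 1 - Real.exp (-a) := by linarith
  have hlea : 1 - Real.exp (-a) ≤ a := by nlinarith [Real.add_one_le_exp (-a)]
  have hak : 0 < a ^ k := pow_pos h0 k
  have haka : a ^ k ≤ a := by
    calc a ^ k ≤ a ^ 1 := pow_le_pow_of_le_one h0.le h1.le hk
      _ = a := pow_one a
  have he1 : Real.exp 1 < 3 := lt_trans Real.exp_one_lt_d9 (by norm_num)
  have hinv : (1 : ℝ) / 3 ≤ Real.exp (-1) := by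
    rw [Real.exp_neg, one_div]
    exact inv_anti₀ (Real.exp_pos 1) he1.le
  by_cases hc : 3 * a ^ k ≤ 1
  · have hxe : 3 * a ^ k * Real.exp (-(3 * a ^ k)) ≤ 1 - Real.exp (-(3 * a ^ k)) := by
      have h := Real.add_one_le_exp (3 * a ^ k)
      have h2 := mul_le_mul_of_nonneg_right h (Real.exp_nonneg (-(3 * a ^ k)))
      rw [← Real.exp_add, add_neg_cancel, Real.exp_zero] at h2
      nlinarith
    have hexk : Real.exp (-1) ≤ Real.exp (-(3 * a ^ k)) :=
      Real.exp_le_exp.mpr (by linarith)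
    have hLHS : (1 - Real.exp (-a)) ^ (k + 1) ≤ a ^ k := by
      calc (1 - Real.exp (-a)) ^ (k + 1) ≤ a ^ (k + 1) := pow_le_pow_left₀ h1a hlea (k + 1)
        _ = a ^ k * a := pow_succ a k
        _ ≤ a ^ k * 1 := by nlinarith
        _ = a ^ k := mul_one _
    have hRHS : a ^ k ≤ 1 - Real.exp (-(3 * a ^ k)) := by
      calc a ^ k = 3 * a ^ k * (1 / 3) := by ring
        _ ≤ 3 * a ^ k * Real.exp (-1) := by nlinarith
        _ ≤ 3 * a ^ k * Real.exp (-(3 * a ^ k)) := by nlinarith [Real.exp_pos (-1)]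
        _ ≤ 1 - Real.exp (-(3 * a ^ k)) := hxe
    linarith
  · push_neg at hc
    have hexk : Real.exp (-(3 * a ^ k)) ≤ Real.exp (-1) :=
      Real.exp_le_exp.mpr (by linarith)
    have hbase : 1 - Real.exp (-a) ≤ 1 - Real.exp (-1) := by
      have : Real.exp (-1) ≤ Real.exp (-a) := Real.exp_le_exp.mpr (by linarith)
      linarith
    calc (1 - Real.exp (-a)) ^ (k + 1) ≤ 1 - Real.exp (-a) :=
          pow_le_of_le_one h1a (by linarith) (Nat.succ_ne_zero k)
      _ ≤ 1 - Real.exp (-1) := hbase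
      _ ≤ 1 - Real.exp (-(3 * a ^ k)) := by linarith

lemma eq_zero_of_mulVec {A : Matrix (Fin n) (Fin n) ℝ} (h : ∀ v, A *ᵥ v = 0) : A = 0 := by
  ext i j
  have := congrFun (h (Pi.single j 1)) i
  rw [mulVec_single] at this
  simpa using this

end BoostAux

open BoostAux

/-- Boosting the pseudoinverse approximation: if L̃⁺ ≈_α L⁺ with α < 1/2, then
L_k = e^{−α}·Σ_{i=0}^{k} L̃⁺(I − e^{−α}·L·L̃⁺)^i satisfies L_k ≈_{O((2α)^k)} L⁺. -/
theorem boost_pseudoinverse_approx {n : ℕ} (L Lp Lt : Matrix (Fin n) (Fin n) ℝ) (α : ℝ)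
    (hL : L.PosSemidef)
    (hker : ∀ v : Fin n → ℝ, L *ᵥ v = 0 ↔ ∃ c : ℝ, v = fun _ => c)
    -- Lp is the Moore–Penrose pseudoinverse of L
    (hp1 : L * Lp * L = L) (hp2 : Lp * L * Lp = Lp)
    (hp3 : (Lp * L)ᵀ = Lp * L) (hp4 : (L * Lp)ᵀ = L * Lp)
    -- L̃⁺ is symmetric PSD with the same kernel as L
    (hLt : Lt.PosSemidef) (hkert : ∀ v : Fin n → ℝ, Lt *ᵥ v = 0 ↔ L *ᵥ v = 0)
    (hα0 : 0 < α) (hα : α < 1 / 2)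
    -- L̃⁺ ≈_α L⁺
    (happ1 : (Lp - Real.exp (-α) • Lt).PosSemidef)
    (happ2 : (Real.exp α • Lt - Lp).PosSemidef) :
    ∃ C : ℝ, 0 < C ∧ ∀ k : ℕ, 1 ≤ k →
      let Lk : Matrix (Fin n) (Fin n) ℝ :=
        Real.exp (-α) • ∑ i ∈ Finset.range (k + 1),
          Lt * ((1 : Matrix (Fin n) (Fin n) ℝ) - Real.exp (-α) • (L * Lt)) ^ i
      (Lp - Real.exp (-(C * (2 * α) ^ k)) • Lk).PosSemidef ∧
        (Real.exp (C * (2 * α) ^ k) • Lk - Lp).PosSemidef := by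
  have hLs : Lᵀ = L := psd_symm hL
  have hLts : Ltᵀ = Lt := psd_symm hLt
  -- symmetry of the pseudoinverse
  have hLps : Lpᵀ = Lp := by
    have hx1 : L * Lpᵀ * L = L := by
      have e : (L * Lp * L)ᵀ = L * Lpᵀ * L := by
        simp only [transpose_mul, hLs, mul_assoc]
      rw [← e, hp1, hLs]
    have hx2 : Lpᵀ * L * Lpᵀ = Lpᵀ := by
      have e : (Lp * L * Lp)ᵀ = Lpᵀ * L * Lpᵀ := by
        simp only [transpose_mul, hLs, mul_assoc]
      rw [← e, hp2]
    have e1 : Lpᵀ * L = L * Lp := by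
      conv_rhs => rw [← hp4]
      rw [transpose_mul, hLs]
    have e2 : L * Lpᵀ = Lp * L := by
      conv_rhs => rw [← hp3]
      rw [transpose_mul, hLs]
    have hx3 : (Lpᵀ * L)ᵀ = Lpᵀ * L := by rw [e1, hp4]
    have hx4 : (L * Lpᵀ)ᵀ = L * Lpᵀ := by rw [e2, hp3]
    exact mp_unique hx1 hx2 hx3 hx4 hp1 hp3 hp4 hp2
  have hcomm : L * Lp = Lp * L := by
    conv_lhs => rw [← hp4]
    rw [transpose_mul, hLps, hLs]
  have hLpPSD : Lp.PosSemidef := by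
    have h := psd_conj hL Lp
    rwa [hLps, hp2] at h
  -- `Lt` is supported on the range of `L`
  have hLtPi : Lt * (Lp * L) = Lt := by
    have hz : Lt * (1 - Lp * L) = 0 := by
      apply eq_zero_of_mulVec
      intro v
      rw [← mulVec_mulVec]
      apply (hkert _).mpr
      rw [mulVec_mulVec, mul_sub, mul_one, ← mul_assoc, hp1, sub_self, zero_mulVec]
    rw [mul_sub, mul_one] at hz
    exact (sub_eq_zero.mp hz).symm
  have hPiLt : Lp * L * Lt = Lt := by
    have e : (Lt * (Lp * L))ᵀ = Lp * L * Lt := by rw [transpose_mul, hp3, hLts]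
    rw [← e, hLtPi, hLts]
  obtain ⟨M, hMdef⟩ : ∃ M' : Matrix (Fin n) (Fin n) ℝ,
      M' = (1 : Matrix (Fin n) (Fin n) ℝ) - Real.exp (-α) • (L * Lt) := ⟨_, rfl⟩
  have hLpM : Lp * M = Lp - Real.exp (-α) • Lt := by
    rw [hMdef, mul_sub, mul_one, Matrix.mul_smul, ← mul_assoc, hPiLt]
  have hMT : Mᵀ = 1 - Real.exp (-α) • (Lt * L) := by
    rw [hMdef, transpose_sub, transpose_one, transpose_smul, transpose_mul, hLs, hLts]
  have hMTLp : Mᵀ * Lp = Lp - Real.exp (-α) • Lt := by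
    rw [hMT, sub_mul, one_mul, Matrix.smul_mul, mul_assoc, hcomm, hLtPi]
  have hswap : Lp * M = Mᵀ * Lp := by rw [hLpM, hMTLp]
  have hMLM : Mᵀ * Lp * M = Lp * M ^ 2 := by
    rw [← hswap, pow_two, mul_assoc]
  have hstep2 : ∀ m : ℕ, Lp * M ^ (m + 2) = Mᵀ * (Lp * M ^ m) * M := by
    intro m
    calc Lp * M ^ (m + 2) = Lp * (M * M ^ m * M) := by
          rw [pow_succ, pow_succ']
      _ = (Lp * M) * M ^ m * M := by simp only [mul_assoc]
      _ = (Mᵀ * Lp) * M ^ m * M := by rw [hswap]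
      _ = Mᵀ * (Lp * M ^ m) * M := by simp only [mul_assoc]
  set ε₀ : ℝ := 1 - Real.exp (-(2 * α)) with hε₀def
  have hε₀0 : 0 ≤ ε₀ := by
    have : Real.exp (-(2 * α)) ≤ 1 := Real.exp_le_one_iff.mpr (by linarith)
    rw [hε₀def]; linarith
  -- base cases
  have hB1psd : (Lp * M).PosSemidef := by rw [hLpM]; exact happ1
  have hB1ub : (ε₀ • Lp - Lp * M).PosSemidef := by
    rw [hLpM]
    have h2 := psd_smul (Real.exp_nonneg (-(2 * α))) happ2
    have heq : Real.exp (-(2 * α)) • (Real.exp α • Lt - Lp)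
        = ε₀ • Lp - (Lp - Real.exp (-α) • Lt) := by
      rw [smul_sub, smul_smul, ← Real.exp_add, show -(2 * α) + α = -α by ring, hε₀def]
      module
    rwa [heq] at h2
  have hB2eq : Lp * M ^ 2 = (Lp * M) * L * (Lp * M) := by
    calc Lp * M ^ 2 = (Lp * M) * M := by rw [pow_two, ← mul_assoc]
      _ = (Mᵀ * Lp) * M := by rw [hswap]
      _ = Mᵀ * (Lp * L * Lp) * M := by rw [hp2]
      _ = (Mᵀ * Lp) * L * (Lp * M) := by simp only [mul_assoc]
      _ = (Lp * M) * L * (Lp * M) := by rw [← hswap]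
  have hB2psd : (Lp * M ^ 2).PosSemidef := by
    rw [hB2eq]
    have h := psd_conj hL (Lp * M)
    rwa [psd_symm hB1psd] at h
  have hB2ub : ((ε₀ ^ 2) • Lp - Lp * M ^ 2).PosSemidef := by
    rw [hB2eq]
    exact cs_step hL hLpPSD hp1 hB1psd hB1ub
  -- two-step induction
  set P : ℕ → Prop := fun m =>
    (Lp * M ^ m).PosSemidef ∧ ((ε₀ ^ m) • Lp - Lp * M ^ m).PosSemidef with hPdef
  have hP1 : P 1 := by
    constructor
    · rw [pow_one]; exact hB1psd
    · rw [pow_one, pow_one]; exact hB1ub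
  have hP2 : P 2 := ⟨hB2psd, hB2ub⟩
  have hstep : ∀ m : ℕ, P m → P (m + 2) := by
    rintro m ⟨hpsd, hub⟩
    constructor
    · rw [hstep2 m]
      exact psd_conj hpsd M
    · have hconj := psd_conj hub M
      have hb2s := psd_smul (pow_nonneg hε₀0 m) hB2ub
      have hsum := hb2s.add hconj
      have heq : ε₀ ^ m • (ε₀ ^ 2 • Lp - Lp * M ^ 2)
          + Mᵀ * (ε₀ ^ m • Lp - Lp * M ^ m) * M
          = ε₀ ^ (m + 2) • Lp - Lp * M ^ (m + 2) := by
        rw [hstep2 m, mul_sub, sub_mul, Matrix.mul_smul, Matrix.smul_mul, hMLM,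
          smul_sub, smul_smul, ← pow_add]
        abel
      rwa [heq] at hsum
  have hPall : ∀ j : ℕ, P (j + 1) ∧ P (j + 2) := by
    intro j
    induction j with
    | zero => exact ⟨hP1, hP2⟩
    | succ j ih => exact ⟨ih.2, hstep _ ih.1⟩
  -- telescoping identity
  have htel : ∀ m : ℕ,
      Lp - Real.exp (-α) • ∑ i ∈ Finset.range (m + 1), Lt * M ^ i = Lp * M ^ (m + 1) := by
    intro m
    induction m with
    | zero =>
      rw [Finset.sum_range_one, pow_zero, mul_one, pow_one, hLpM]
    | succ m ih =>
      rw [Finset.sum_range_succ, smul_add, ← sub_sub, ih]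
      conv_rhs => rw [pow_succ', ← mul_assoc, hLpM]
      rw [sub_mul, Matrix.smul_mul]
  -- final assembly
  refine ⟨3, by norm_num, ?_⟩
  intro k hk
  intro Lk
  have hLk : Lk = Real.exp (-α) • ∑ i ∈ Finset.range (k + 1), Lt * M ^ i := by
    rw [hMdef]
  have hPk : P (k + 1) := (hPall k).1
  have hE : Lp - Lk = Lp * M ^ (k + 1) := by rw [hLk]; exact htel k
  have hLkE : Lk = Lp - Lp * M ^ (k + 1) := by rw [← hE]; abel
  have ha0 : (0 : ℝ) < 2 * α := by linarith
  have ha1 : 2 * α < 1 := by linarith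
  have hscal : ε₀ ^ (k + 1) ≤ 1 - Real.exp (-(3 * (2 * α) ^ k)) := by
    rw [hε₀def]
    exact scalar_ineq ha0 ha1 hk
  set r : ℝ := Real.exp (-(3 * (2 * α) ^ k)) with hrdef
  have hr0 : 0 ≤ r := Real.exp_nonneg _
  have hr1 : r ≤ 1 := by
    rw [hrdef]
    apply Real.exp_le_one_iff.mpr
    have : (0:ℝ) < (2 * α) ^ k := pow_pos ha0 k
    nlinarith
  constructor
  · have hid1 : Lp - r • Lk = (1 - r) • Lp + r • (Lp * M ^ (k + 1)) := by
      rw [hLkE]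
      module
    rw [hid1]
    exact (psd_smul (by linarith) hLpPSD).add (psd_smul hr0 hPk.1)
  · have hcoef : 0 ≤ (1 - r) - ε₀ ^ (k + 1) := by
      rw [hrdef]; linarith [hscal]
    have hinner : ((1 - r) • Lp - Lp * M ^ (k + 1)).PosSemidef := by
      have h1 := psd_smul hcoef hLpPSD
      have hsum := h1.add hPk.2
      have heq : ((1 - r) - ε₀ ^ (k + 1)) • Lp
          + (ε₀ ^ (k + 1) • Lp - Lp * M ^ (k + 1))
          = (1 - r) • Lp - Lp * M ^ (k + 1) := by module
      rwa [heq] at hsum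
    have h2 := psd_smul (Real.exp_nonneg (3 * (2 * α) ^ k)) hinner
    have hmul : Real.exp (3 * (2 * α) ^ k) * r = 1 := by
      rw [hrdef, ← Real.exp_add, add_neg_cancel, Real.exp_zero]
    have hc : Real.exp (3 * (2 * α) ^ k) * (1 - r) = Real.exp (3 * (2 * α) ^ k) - 1 := by
      rw [mul_sub, mul_one, hmul]
    have heq2 : Real.exp (3 * (2 * α) ^ k) • ((1 - r) • Lp - Lp * M ^ (k + 1))
        = Real.exp (3 * (2 * α) ^ k) • Lk - Lp := by
      rw [smul_sub, smul_smul, hc, hLkE, smul_sub, sub_smul, one_smul]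
      abel
    rwa [heq2] at h2
end
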